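/- arXiv:2509.08684 — 8 statements merged into one kernel-verified Lean document; each statement's English description precedes it below -/
import Mathlib

section
/- For every balanced binary word w, at least one of w0 and w1 is balanced. -/
/-!
Appending a letter `b` to a balanced word `w` can only break balance through a new suffix `s b`
(with `s` a suffix of `w`) against an old factor of the same length. Since that factor, with its
last letter dropped, has weight within `1` of `s`, `w0` unbalanced gives a factor `u` with
`|u| = |s| + 1` and `|u|₁ ≥ |s|₁ + 2`, while `w1` unbalanced gives a factor `x` with
`|x| = |t| + 1` and `|x|₁ ≤ |t|₁ - 1`. One of `s`, `t` is a suffix of the other. If `t = t's`,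
cutting `x` into factors of lengths `|t'|` and `|u|` and comparing each piece gives
`|x|₁ ≥ |t'|₁ + |u|₁ - 2 ≥ |t|₁`; if `s = s't`, cutting `u` against `s'` and `x` gives
`|u|₁ ≤ |s'|₁ + |x|₁ + 2 ≤ |s|₁ + 1`. Both are contradictions.
-/

def IsBalanced (w : List Bool) : Prop :=
  ∀ u v : List Bool, u <:+: w → v <:+: w → u.length = v.length →
    |(u.count true : ℤ) - (v.count true : ℤ)| ≤ 1

namespace List

variable {α : Type*}

theorem infix_append_singleton_cases {u w : List α} {b : α} (h : u <:+: w ++ [b]) :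
    u <:+: w ∨ ∃ s, s <:+ w ∧ u = s ++ [b] := by
  rcases infix_concat_iff.mp h with h | h
  · rcases suffix_concat_iff.mp h with rfl | ⟨s, rfl, hs⟩
    · exact Or.inl nil_infix
    · exact Or.inr ⟨s, hs, rfl⟩
  · exact Or.inl h

theorem count_take_add_count_drop [BEq α] (l : List α) (n : ℕ) (a : α) :
    (l.take n).count a + (l.drop n).count a = l.count a := by
  rw [← count_append, take_append_drop]

end List

open List

namespace IsBalanced

variable {w : List Bool}

theorem abs_count_sub_count_add_count_le_two (hw : IsBalanced w) {x y z : List Bool}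
    (hx : x <:+: w) (hy : y <:+: w) (hz : z <:+: w) (h : x.length = y.length + z.length) :
    |(x.count true : ℤ) - (y.count true + z.count true)| ≤ 2 := by
  have hy' := hw _ y ((take_prefix y.length x).isInfix.trans hx) hy (by rw [length_take]; omega)
  have hz' := hw _ z ((drop_suffix y.length x).isInfix.trans hx) hz (by rw [length_drop]; omega)
  have hsplit := count_take_add_count_drop x y.length true
  rw [abs_sub_le_iff] at hy' hz' ⊢
  omega

theorem count_bounds_of_length_eq_succ (hw : IsBalanced w) {u s : List Bool}
    (hu : u <:+: w) (hs : s <:+: w) (h : u.length = s.length + 1) :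
    (s.count true : ℤ) ≤ u.count true + 1 ∧ (u.count true : ℤ) ≤ s.count true + 2 := by
  have hhead := hw _ s ((take_prefix s.length u).isInfix.trans hu) hs (by rw [length_take]; omega)
  have hlast : (u.drop s.length).count true ≤ 1 :=
    (count_le_length ..).trans (by rw [length_drop]; omega)
  have hsplit := count_take_add_count_drop u s.length true
  rw [abs_sub_le_iff] at hhead
  omega

theorem exists_of_not_isBalanced_append_singleton (hw : IsBalanced w) {b : Bool}
    (h : ¬ IsBalanced (w ++ [b])) :
    ∃ u s, u <:+: w ∧ s <:+ w ∧ u.length = s.length + 1 ∧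
      1 < |((s ++ [b]).count true : ℤ) - u.count true| := by
  simp only [IsBalanced, not_forall, not_le] at h
  obtain ⟨u, v, hu, hv, hlen, hgap⟩ := h
  rcases infix_append_singleton_cases hu with hu | ⟨s, hs, rfl⟩ <;>
    rcases infix_append_singleton_cases hv with hv | ⟨t, ht, rfl⟩
  · exact absurd (hw u v hu hv hlen) hgap.not_ge
  · exact ⟨u, t, hu, ht, by simpa using hlen, by rwa [abs_sub_comm]⟩
  · exact ⟨v, s, hv, hs, by simpa using hlen.symm, hgap⟩
  · have hlen' : s.length = t.length := by simpa using hlen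
    have hst : s = t :=
      (suffix_of_suffix_length_le hs ht hlen'.le).eq_of_length hlen'
    simp [hst] at hgap

theorem exists_heavy_of_not_isBalanced_append_false (hw : IsBalanced w)
    (h : ¬ IsBalanced (w ++ [false])) :
    ∃ u s, u <:+: w ∧ s <:+ w ∧ u.length = s.length + 1 ∧
      (s.count true : ℤ) + 2 ≤ u.count true := by
  obtain ⟨u, s, hu, hs, hlen, hgap⟩ := hw.exists_of_not_isBalanced_append_singleton h
  have hbounds := hw.count_bounds_of_length_eq_succ hu hs.isInfix hlen
  refine ⟨u, s, hu, hs, hlen, ?_⟩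
  have hlast : [false].count true = 0 := rfl
  rw [count_append, hlast, lt_abs] at hgap
  omega

theorem exists_light_of_not_isBalanced_append_true (hw : IsBalanced w)
    (h : ¬ IsBalanced (w ++ [true])) :
    ∃ x t, x <:+: w ∧ t <:+ w ∧ x.length = t.length + 1 ∧
      (x.count true : ℤ) + 1 ≤ t.count true := by
  obtain ⟨x, t, hx, ht, hlen, hgap⟩ := hw.exists_of_not_isBalanced_append_singleton h
  have hbounds := hw.count_bounds_of_length_eq_succ hx ht.isInfix hlen
  refine ⟨x, t, hx, ht, hlen, ?_⟩
  have hlast : [true].count true = 1 := rfl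
  rw [count_append, hlast, lt_abs] at hgap
  omega

end IsBalanced

/-- For every balanced word `w`, at least one of `w0`, `w1` is balanced. -/
theorem balanced_extend_right (w : List Bool) (hw : IsBalanced w) :
    IsBalanced (w ++ [false]) ∨ IsBalanced (w ++ [true]) := by
  by_contra! h
  obtain ⟨u, s, hu, hs, hus, hheavy⟩ := hw.exists_heavy_of_not_isBalanced_append_false h.1
  obtain ⟨x, t, hx, ht, hxt, hlight⟩ := hw.exists_light_of_not_isBalanced_append_true h.2
  rcases suffix_or_suffix_of_suffix hs ht with ⟨t', rfl⟩ | ⟨s', rfl⟩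
  · have hsplit := hw.abs_count_sub_count_add_count_le_two hx
      ((prefix_append t' s).isInfix.trans ht.isInfix) hu (by rw [length_append] at hxt; omega)
    rw [count_append] at hlight
    rw [abs_sub_le_iff] at hsplit
    omega
  · have hsplit := hw.abs_count_sub_count_add_count_le_two hu
      ((prefix_append s' t).isInfix.trans hs.isInfix) hx (by rw [length_append] at hus; omega)
    rw [count_append] at hheavy
    rw [abs_sub_le_iff] at hsplit
    omega
end

section
/- If a binary word w has two coprime periods p and q and length |w| = p + q - 2, then w is a palindrome. -/
def HasPeriod {α : Type*} (w : List α) (p : ℕ) : Prop :=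
  0 < p ∧ ∀ i j : ℕ, i < w.length → j < w.length → i % p = j % p → w[i]? = w[j]?

/-!
Induction on `p + q`. For `p < q`, the prefix `u` of `w` of length `|w| - p = q - 2` has the
coprime periods `p` and `q - p`, so it is a palindrome by induction. Since `w` has period `p`,
mirroring inside `u` and then shifting by `p` matches position `i` of `w` with `|w| - 1 - i`
for every `i < q - 2`; as `p ≤ q - 1`, these positions and their mirror images cover all of `w`
except possibly its centre.
-/

namespace HasPeriod

variable {α : Type*} {w : List α} {p q : ℕ}

theorem getElem?_add (hp : HasPeriod w p) {i : ℕ} (hi : i + p < w.length) :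
    w[i]? = w[i + p]? :=
  hp.2 i (i + p) (by omega) hi (Nat.add_mod_right i p).symm

theorem of_getElem?_add (hp0 : 0 < p) (hshift : ∀ i, i + p < w.length → w[i]? = w[i + p]?) :
    HasPeriod w p := by
  have hmod : ∀ i, i < w.length → w[i]? = w[i % p]? := by
    intro i
    induction i using Nat.strong_induction_on with
    | _ i ih =>
      intro hi
      rcases lt_or_ge i p with h | h
      · rw [Nat.mod_eq_of_lt h]
      · obtain ⟨j, rfl⟩ := Nat.exists_eq_add_of_le' h
        rw [← hshift j hi, Nat.add_mod_right]
        exact ih j (by omega) (by omega)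
  exact ⟨hp0, fun i j hi hj hij => by rw [hmod i hi, hmod j hj, hij]⟩

theorem take (hp : HasPeriod w p) (k : ℕ) : HasPeriod (w.take k) p := by
  refine ⟨hp.1, fun i j hi hj hij => ?_⟩
  simp only [List.length_take, lt_min_iff] at hi hj
  simp only [List.getElem?_take, if_pos hi.1, if_pos hj.1]
  exact hp.2 i j hi.2 hj.2 hij

theorem take_length_sub (hp : HasPeriod w p) (hq : HasPeriod w q) (hpq : p < q) :
    HasPeriod (w.take (w.length - p)) (q - p) := by
  refine of_getElem?_add (by omega) fun i hi => ?_
  simp only [List.length_take] at hi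
  rw [List.getElem?_take, List.getElem?_take, if_pos (by omega), if_pos (by omega)]
  calc w[i]? = w[i + q]? := hq.getElem?_add (by omega)
    _ = w[i + (q - p)]? := by
      rw [show i + q = i + (q - p) + p by omega]
      exact (hp.getElem?_add (by omega)).symm

theorem reverse_eq_of_reverse_take (hp : HasPeriod w p) (hlen : 2 * p ≤ w.length + 1)
    (hu : (w.take (w.length - p)).reverse = w.take (w.length - p)) : w.reverse = w := by
  set n := w.length
  have hmirror : ∀ i, i < n - p → w[n - 1 - i]? = w[i]? := by
    intro i hi
    have hui := congrArg (·[i]?) hu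
    have hiu : i < (w.take (n - p)).length := by simp only [List.length_take]; omega
    simp only [List.getElem?_reverse hiu, List.length_take, List.getElem?_take] at hui
    rw [if_pos (by omega), if_pos hi, show min (n - p) n - 1 - i = n - p - 1 - i by omega] at hui
    calc w[n - 1 - i]? = w[n - p - 1 - i + p]? := by rw [show n - p - 1 - i + p = n - 1 - i by omega]
      _ = w[n - p - 1 - i]? := (hp.getElem?_add (by omega)).symm
      _ = w[i]? := hui
  refine List.ext_getElem? fun i => ?_
  rcases lt_or_ge i n with hi | hi
  · rw [List.getElem?_reverse hi]
    by_cases hleft : i < n - p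
    · exact hmirror i hleft
    by_cases hright : n - 1 - i < n - p
    · rw [← hmirror _ hright, show n - 1 - (n - 1 - i) = i by omega]
    · rw [show n - 1 - i = i by omega]
  · rw [List.getElem?_eq_none (by simpa using hi), List.getElem?_eq_none hi]

theorem reverse_eq_of_coprime (hp : HasPeriod w p) (hq : HasPeriod w q) (hco : p.Coprime q)
    (hlen : w.length = p + q - 2) : w.reverse = w := by
  induction hs : p + q using Nat.strong_induction_on generalizing w p q with
  | _ s ih =>
  wlog hpq : p ≤ q generalizing p q
  · exact this hq hp hco.symm (by omega) (by omega) (by omega)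
  rcases hpq.eq_or_lt with rfl | hpq
  · have hp1 : p = 1 := (Nat.coprime_self p).mp hco
    rw [List.eq_nil_of_length_eq_zero (by omega : w.length = 0), List.reverse_nil]
  · have hco' : p.Coprime (q - p) := (Nat.coprime_sub_self_right hpq.le).mpr hco
    have hu := ih q (by have := hp.1; omega) (hp.take _) (hp.take_length_sub hq hpq) hco'
      (by simp only [List.length_take]; omega) (by omega)
    exact hp.reverse_eq_of_reverse_take (by omega) hu

end HasPeriod

/-- A binary word with two coprime periods `p`, `q` and length `p + q - 2`
(a central word) is a palindrome. -/
theorem central_palindrome (w : List Bool) (p q : ℕ)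
    (hp : HasPeriod w p) (hq : HasPeriod w q) (hco : Nat.Coprime p q)
    (hlen : w.length = p + q - 2) :
    w.reverse = w :=
  hp.reverse_eq_of_coprime hq hco hlen
end

section
/- If a binary word w has two coprime periods p and q and length p + q - 2, then w is balanced. -/
/-!
Let `n = p + q` and let `a` be the inverse of `q` modulo `n`. Identify position `i` of `w` with
the residue `i + 1` modulo `n`; the positions are then the residues other than `0` and `-1`.
Adding `q` to the residue means moving `q` to the right or `p` to the left in `w`, so it preserves
the letter whenever both ends are positions. Along the orbit `t ↦ t * q` the two missing residues
are reached at `t = 0` and `t = n - a`, so the letter at position `i` only depends on whether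
`t = a * (i + 1) mod n` lies below or above `n - a`. That is exactly whether `⌊a * (i + 1) / n⌋`
jumps at `i`, so `w` is a mechanical word: the number of `1`s in a factor is, up to a term
depending only on its length, a difference `⌊a * (s + ℓ + 1) / n⌋ - ⌊a * (s + 1) / n⌋`, which
takes only two consecutive values.
-/

theorem List.count_true_take_eq_sub {w : List Bool} {F : ℕ → ℤ}
    (hw : ∀ i (hi : i < w.length), (w[i].toNat : ℤ) = F (i + 1) - F i) :
    ∀ m ≤ w.length, ((w.take m).count true : ℤ) = F m - F 0 := by
  intro m hm
  induction m with
  | zero => simp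
  | succ m ih =>
    have hsingle : ∀ b : Bool, ([b].count true : ℤ) = b.toNat := by decide
    rw [List.take_succ_eq_append_getElem hm, List.count_append, Nat.cast_add, ih (by omega),
      hsingle, hw m hm]
    ring

theorem List.IsInfix.exists_count_true_eq_sub {w u : List Bool} {F : ℕ → ℤ}
    (hw : ∀ i (hi : i < w.length), (w[i].toNat : ℤ) = F (i + 1) - F i) (hu : u <:+: w) :
    ∃ s, (u.count true : ℤ) = F (s + u.length) - F s := by
  obtain ⟨s, t, rfl⟩ := hu
  have hprefix := List.count_true_take_eq_sub hw
  have hs := hprefix s.length (by simp)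
  have hsu := hprefix (s ++ u).length (by simp)
  rw [List.append_assoc, List.take_left] at hs
  rw [List.take_left, List.count_append, List.length_append] at hsu
  exact ⟨s.length, by push_cast at hsu; linarith⟩

theorem isBalanced_of_toNat_getElem_eq_sub {w : List Bool} {F : ℕ → ℤ}
    (hF : ∀ s t ℓ, |F (s + ℓ) - F s - (F (t + ℓ) - F t)| ≤ 1)
    (hw : ∀ i (hi : i < w.length), (w[i].toNat : ℤ) = F (i + 1) - F i) : IsBalanced w := by
  intro u v hu hv huv
  obtain ⟨s, hs⟩ := hu.exists_count_true_eq_sub hw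
  obtain ⟨t, ht⟩ := hv.exists_count_true_eq_sub hw
  rw [hs, ht, huv]
  exact hF s t v.length

theorem Nat.abs_add_div_sub_div_sub_le_one (x y c n : ℕ) :
    |((x + c) / n : ℕ) - (x / n : ℕ) - (((y + c) / n : ℕ) - (y / n : ℕ) : ℤ)| ≤ 1 := by
  have hx₁ : x / n + c / n ≤ (x + c) / n := Nat.div_add_div_le_add_div
  have hx₂ := Nat.add_div_le_div_add_div_add_one x c n
  have hy₁ : y / n + c / n ≤ (y + c) / n := Nat.div_add_div_le_add_div
  have hy₂ := Nat.add_div_le_div_add_div_add_one y c n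
  rw [abs_le]
  constructor <;> omega

theorem isBalanced_of_getElem_eq_ite {w : List Bool} {a n : ℕ} (han : a < n) (b₀ b₁ : Bool)
    (hw : ∀ i (hi : i < w.length), w[i] = if n - a ≤ a * (i + 1) % n then b₁ else b₀) :
    IsBalanced w := by
  have hjump : ∀ i, a * (i + 1 + 1) / n =
      a * (i + 1) / n + if n - a ≤ a * (i + 1) % n then 1 else 0 := by
    intro i
    rw [mul_add_one, Nat.add_div (by omega), Nat.div_eq_of_lt han, Nat.mod_eq_of_lt han, add_zero]
    exact congrArg _ (if_congr (by omega) rfl rfl)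
  refine isBalanced_of_toNat_getElem_eq_sub
    (F := fun i => b₀.toNat * i + (b₁.toNat - b₀.toNat) * (a * (i + 1) / n : ℕ)) ?_ ?_
  · intro s t ℓ
    have hsplit : ∀ s, a * (s + ℓ + 1) = a * (s + 1) + a * ℓ := fun s => by ring
    have hb : |(b₁.toNat : ℤ) - b₀.toNat| ≤ 1 := by cases b₀ <;> cases b₁ <;> simp
    calc _ = |((b₁.toNat : ℤ) - b₀.toNat) *
          (((a * (s + 1) + a * ℓ) / n : ℕ) - (a * (s + 1) / n : ℕ)
            - (((a * (t + 1) + a * ℓ) / n : ℕ) - (a * (t + 1) / n : ℕ)))| := by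
          rw [← hsplit, ← hsplit]
          congr 1
          push_cast
          ring
      _ ≤ 1 * 1 := by
          rw [abs_mul]
          exact mul_le_mul hb (Nat.abs_add_div_sub_div_sub_le_one _ _ _ _) (abs_nonneg _)
            zero_le_one
      _ = 1 := one_mul 1
  · intro i hi
    rw [hw i hi, hjump i]
    split_ifs <;> push_cast <;> ring

theorem List.exists_getElem_eq_ite {α : Type*} [Nonempty α] {w : List α} (P : ℕ → Prop)
    [DecidablePred P]
    (h : ∀ i j (hi : i < w.length) (hj : j < w.length), (P i ↔ P j) → w[i] = w[j]) :
    ∃ b₀ b₁ : α, ∀ i (hi : i < w.length), w[i] = if P i then b₁ else b₀ := by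
  have hpick : ∀ Q : Prop, ∃ b : α, ∀ i (hi : i < w.length), (P i ↔ Q) → w[i] = b := by
    intro Q
    by_cases hex : ∃ k, ∃ hk : k < w.length, (P k ↔ Q)
    · obtain ⟨k, hk, hkQ⟩ := hex
      exact ⟨w[k], fun i hi hiQ => h i k hi hk (hiQ.trans hkQ.symm)⟩
    · exact ⟨Classical.arbitrary α, fun i hi hiQ => absurd ⟨i, hi, hiQ⟩ hex⟩
  obtain ⟨b₀, hb₀⟩ := hpick False
  obtain ⟨b₁, hb₁⟩ := hpick True
  refine ⟨b₀, b₁, fun i hi => ?_⟩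
  split_ifs with hP
  · exact hb₁ i hi (iff_true_intro hP)
  · exact hb₀ i hi (iff_false_intro hP)

theorem Nat.dvd_iff_eq_of_pos_of_lt_two_mul {m n : ℕ} (hm : 0 < m) (hmn : m < 2 * n) :
    n ∣ m ↔ m = n :=
  ⟨fun h => Nat.eq_of_dvd_of_lt_two_mul hm.ne' h hmn, fun h => h ▸ dvd_rfl⟩

theorem ZMod.natCast_mul_eq_one_of_mul_mod_eq_one {n q a : ℕ} (hqa : q * a % n = 1) :
    (q * a : ZMod n) = 1 := by
  rw [← Nat.cast_mul, ← ZMod.natCast_mod, hqa, Nat.cast_one]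

theorem ZMod.val_lt_sub_two_iff {n : ℕ} (hn : 2 ≤ n) (x : ZMod n) :
    x.val < n - 2 ↔ x + 1 ≠ 0 ∧ x + 2 ≠ 0 := by
  have : NeZero n := ⟨by omega⟩
  have hx := ZMod.val_lt x
  have hval : ∀ k : ℕ, 0 < k → k ≤ n → (x + k = 0 ↔ x.val + k = n) := fun k hk hkn => by
    rw [← Nat.dvd_iff_eq_of_pos_of_lt_two_mul (by omega) (by omega), ← ZMod.natCast_eq_zero_iff,
      Nat.cast_add, ZMod.natCast_zmod_val]
  have h1 := hval 1 one_pos (by omega)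
  have h2 := hval 2 two_pos hn
  push_cast at h1 h2
  rw [ne_eq, h1, ne_eq, h2]
  omega

theorem ZMod.val_natCast_mul_sub_one_lt_iff {n q a t : ℕ} (hqa : q * a % n = 1) (han : a < n)
    (htn : t < n) : (t * q - 1 : ZMod n).val < n - 2 ↔ t ≠ 0 ∧ t + a ≠ n := by
  have hn : 2 ≤ n := by
    by_contra h
    interval_cases n <;> omega
  have ha : 0 < a := Nat.pos_of_ne_zero (by rintro rfl; simp at hqa)
  have hqa' := ZMod.natCast_mul_eq_one_of_mul_mod_eq_one hqa
  have h0 : (t * q : ZMod n) = 0 ↔ (t : ZMod n) = 0 :=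
    ⟨fun h => by linear_combination (a : ZMod n) * h - t * hqa', fun h => by rw [h, zero_mul]⟩
  have h1 : (t * q + 1 : ZMod n) = 0 ↔ ((t + a : ℕ) : ZMod n) = 0 := by
    push_cast
    exact ⟨fun h => by linear_combination (a : ZMod n) * h - t * hqa',
      fun h => by linear_combination (q : ZMod n) * h - hqa'⟩
  have ht0 : n ∣ t ↔ t = 0 :=
    ⟨fun h => Nat.eq_zero_of_dvd_of_lt h htn, by rintro rfl; exact dvd_zero n⟩
  rw [ZMod.val_lt_sub_two_iff hn, sub_add_cancel, show (t * q - 1 : ZMod n) + 2 = t * q + 1 by ring,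
    ne_eq, h0, ne_eq, h1, ZMod.natCast_eq_zero_iff, ZMod.natCast_eq_zero_iff, ht0,
    Nat.dvd_iff_eq_of_pos_of_lt_two_mul (by omega) (by omega)]

theorem ZMod.val_natCast_mod_mul_sub_one {n q a i : ℕ} (hqa : q * a % n = 1) (hi : i < n) :
    ((a * (i + 1) % n : ℕ) * q - 1 : ZMod n).val = i := by
  have : ((a * (i + 1) % n : ℕ) * q - 1 : ZMod n) = i := by
    rw [ZMod.natCast_mod]
    push_cast
    linear_combination (i + 1 : ZMod n) * ZMod.natCast_mul_eq_one_of_mul_mod_eq_one hqa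
  rw [this, ZMod.val_natCast, Nat.mod_eq_of_lt hi]

section Periods

variable {α : Type*} {w : List α} {p q : ℕ}

theorem HasPeriod.getElem?_eq_of_add_modEq {i j : ℕ}
    (hp : HasPeriod w p) (hq : HasPeriod w q) (hlen : w.length ≤ p + q)
    (hi : i < w.length) (hj : j < w.length) (hij : i + q ≡ j [MOD p + q]) :
    w[i]? = w[j]? := by
  have hj' : (i + q) % (p + q) = j := by rw [hij, Nat.mod_eq_of_lt (by omega)]
  rcases lt_or_ge (i + q) (p + q) with h | h
  · rw [Nat.mod_eq_of_lt h] at hj'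
    subst hj'
    exact hq.2 _ _ hi hj (Nat.add_mod_right i q).symm
  · rw [Nat.mod_eq_sub_mod h, Nat.mod_eq_of_lt (by omega)] at hj'
    obtain rfl : i = j + p := by omega
    exact hp.2 _ _ hi hj (Nat.add_mod_right j p)

theorem HasPeriod.getElem?_val_eq_getElem?_val_add
    (hp : HasPeriod w p) (hq : HasPeriod w q) (hlen : w.length ≤ p + q) (x : ZMod (p + q))
    (hx : x.val < w.length) (hxq : (x + q).val < w.length) :
    w[x.val]? = w[(x + q).val]? := by
  have : NeZero (p + q) := ⟨by have := hp.1; omega⟩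
  refine hp.getElem?_eq_of_add_modEq hq hlen hx hxq ((ZMod.natCast_eq_natCast_iff _ _ _).1 ?_)
  simp

theorem HasPeriod.getElem?_val_mul_sub_one_eq {a m M : ℕ}
    (hp : HasPeriod w p) (hq : HasPeriod w q) (hlen : w.length + 2 = p + q)
    (hqa : q * a % (p + q) = 1) (han : a < p + q) (hm : 0 < m) (hmM : m ≤ M) (hM : M < p + q)
    (hside : M < p + q - a ∨ p + q - a < m) :
    w[(m * q - 1 : ZMod (p + q)).val]? = w[(M * q - 1 : ZMod (p + q)).val]? := by
  have hvalid : ∀ t, m ≤ t → t ≤ M → (t * q - 1 : ZMod (p + q)).val < w.length := by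
    intro t h₁ h₂
    have := (ZMod.val_natCast_mul_sub_one_lt_iff (t := t) hqa han (by omega)).2
      ⟨by omega, by omega⟩
    omega
  induction M, hmM using Nat.le_induction with
  | base => rfl
  | succ M hmM ih =>
    have hshift : ((M + 1 : ℕ) * q - 1 : ZMod (p + q)) = (M * q - 1 : ZMod (p + q)) + q := by
      push_cast
      ring
    rw [ih (by omega) (by omega) fun t h₁ h₂ => hvalid t h₁ (by omega), hshift]
    exact hp.getElem?_val_eq_getElem?_val_add hq (by omega) _ (hvalid M hmM (by omega))
      (hshift ▸ hvalid (M + 1) (by omega) le_rfl)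

theorem HasPeriod.getElem_eq_of_le_mod_iff {a i j : ℕ}
    (hp : HasPeriod w p) (hq : HasPeriod w q) (hlen : w.length + 2 = p + q)
    (hqa : q * a % (p + q) = 1) (han : a < p + q) (hi : i < w.length) (hj : j < w.length)
    (hij : p + q - a ≤ a * (i + 1) % (p + q) ↔ p + q - a ≤ a * (j + 1) % (p + q)) :
    w[i] = w[j] := by
  have hside : ∀ k (hk : k < w.length), w[k]? = w[((if p + q - a ≤ a * (k + 1) % (p + q)
      then p + q - a + 1 else 1) * q - 1 : ZMod (p + q)).val]? := by
    intro k hk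
    have hpos := ZMod.val_natCast_mod_mul_sub_one hqa (show k < p + q by omega)
    have ht := Nat.mod_lt (a * (k + 1)) (show 0 < p + q by omega)
    obtain ⟨h0, ha⟩ := (ZMod.val_natCast_mul_sub_one_lt_iff hqa han ht).1 (by omega)
    conv_lhs => rw [← hpos]
    split_ifs
    · exact (hp.getElem?_val_mul_sub_one_eq hq hlen hqa han (by omega) (by omega) ht
        (by omega)).symm
    · exact (hp.getElem?_val_mul_sub_one_eq hq hlen hqa han one_pos (by omega) ht
        (by omega)).symm
  apply Option.some_injective
  rw [← List.getElem?_eq_getElem hi, ← List.getElem?_eq_getElem hj, hside i hi, hside j hj,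
    if_congr hij rfl rfl]

end Periods

/-- A binary word with two coprime periods `p`, `q` and length `p + q - 2`
(a central word) is balanced. -/
theorem central_balanced (w : List Bool) (p q : ℕ)
    (hp : HasPeriod w p) (hq : HasPeriod w q) (hco : Nat.Coprime p q)
    (hlen : w.length = p + q - 2) :
    IsBalanced w := by
  have hpq : 2 ≤ p + q := by have := hp.1; have := hq.1; omega
  obtain ⟨a, han, hqa⟩ :=
    Nat.exists_mul_mod_eq_one_of_coprime (Nat.coprime_add_self_right.2 hco.symm) hpq
  obtain ⟨b₀, b₁, hb⟩ :=
    List.exists_getElem_eq_ite (fun i => p + q - a ≤ a * (i + 1) % (p + q))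
      fun i j hi hj => hp.getElem_eq_of_le_mod_iff hq (by omega) hqa han hi hj
  exact isBalanced_of_getElem_eq_ite han b₀ b₁ hb
end

section
/- A binary word w is central (i.e., has two coprime periods p, q with |w| = p+q-2) if and only if w is a power of a single letter or there exist palindromes P and Q such that w = P01Q = Q10P. -/
/-!
Read positions modulo `N = p + q`; since `|w| = N - 2`, the residues `-2` and `-1` are the two
positions missing from `w`. For positions `x, y` of `w`, `y ≡ x + p (mod N)` means `y = x + p` or
`y = x - q`, so `w x = w y` by one of the periods. When `p` and `q` are coprime the steps
`x ↦ x + p` run through all residues in one cycle, and the two missing positions cut it into two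
arcs on each of which `w` is constant. The reflection `i ↦ |w| - 1 - i` maps each arc to itself,
so `w` is a palindrome, while `p - 2` and `p - 1` lie on different arcs. Cutting `w` there gives
`w = P x y Q`, and the periods turn the palindrome `w` into `Q y x P` with `P`, `Q` palindromes.
Conversely, if `gcd(p, q) > 1` the cycle through `p - 1` never meets `-2`, so it links `p - 1` to
`q - 1`, which forces `y = x`.
-/

lemma ZMod.val_sub_lt_val_iff {n : ℕ} [NeZero n] {a b : ZMod n} (hb : b ≠ 0) (hba : b ≠ a) :
    (a - b).val < a.val ↔ b.val < a.val := by
  have hb0 : 0 < b.val := ZMod.val_pos.2 hb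
  have hba' : b.val ≠ a.val := fun h => hba (ZMod.val_injective n h)
  rcases lt_or_gt_of_ne hba' with hlt | hlt
  · rw [ZMod.val_sub hlt.le]
    omega
  · have hab : a - b = -(b - a) := (neg_sub b a).symm
    have hne : b - a ≠ 0 := sub_ne_zero.2 hba
    have : NeZero (b - a) := ⟨hne⟩
    rw [hab, ZMod.val_neg_of_ne_zero, ZMod.val_sub hlt.le]
    have := b.val_lt
    omega

-- The `k`-th point of the walk `-1, p - 1, 2p - 1, …` in `ZMod (p + q)`.
def cyclePoint (p q k : ℕ) : ℕ := ((k : ZMod (p + q)) * p - 1).val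

def cycleIndex (p q i : ℕ) : ℕ := (((i : ZMod (p + q)) + 1) * (p : ZMod (p + q))⁻¹).val

section Cycle

variable {p q : ℕ}

lemma cyclePoint_lt [NeZero (p + q)] (k : ℕ) : cyclePoint p q k < p + q :=
  ZMod.val_lt _

lemma natCast_cyclePoint [NeZero (p + q)] (k : ℕ) :
    (cyclePoint p q k : ZMod (p + q)) = k * p - 1 :=
  ZMod.natCast_zmod_val _

lemma cyclePoint_eq {k i : ℕ} (hi : i < p + q) (h : (k : ZMod (p + q)) * p - 1 = i) :
    cyclePoint p q k = i := by
  rw [cyclePoint, h, ZMod.val_cast_of_lt hi]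

lemma cyclePoint_zero (h : 0 < p + q) : cyclePoint p q 0 = p + q - 1 :=
  cyclePoint_eq (by omega) (by rw [Nat.cast_sub h]; simp)

lemma cyclePoint_one (hp : 0 < p) (hq : 0 < q) : cyclePoint p q 1 = p - 1 :=
  cyclePoint_eq (by omega) (by rw [Nat.cast_sub hp]; simp)

lemma cyclePoint_sub_one_of_mul_eq_zero {m : ℕ} (hm : 0 < m) (hq : 0 < q)
    (h : (m : ZMod (p + q)) * p = 0) : cyclePoint p q (m - 1) = q - 1 := by
  refine cyclePoint_eq (by omega) ?_
  have hpq : ((p + q : ℕ) : ZMod (p + q)) = 0 := ZMod.natCast_self _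
  rw [Nat.cast_sub hm, Nat.cast_sub hq]
  push_cast at hpq ⊢
  linear_combination h - hpq

lemma natCast_mul_inv_eq_one (hcop : Nat.Coprime p q) :
    (p : ZMod (p + q)) * (p : ZMod (p + q))⁻¹ = 1 :=
  ZMod.coe_mul_inv_eq_one p (Nat.coprime_self_add_right.2 hcop)

lemma cycleIndex_cyclePoint (hcop : Nat.Coprime p q) {k : ℕ} (hk : k < p + q) :
    cycleIndex p q (cyclePoint p q k) = k := by
  have : NeZero (p + q) := ⟨by omega⟩
  rw [cycleIndex, natCast_cyclePoint, sub_add_cancel, mul_assoc, natCast_mul_inv_eq_one hcop,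
    mul_one, ZMod.val_cast_of_lt hk]

lemma cyclePoint_cycleIndex (hcop : Nat.Coprime p q) {i : ℕ} (hi : i < p + q) :
    cyclePoint p q (cycleIndex p q i) = i := by
  have : NeZero (p + q) := ⟨by omega⟩
  refine cyclePoint_eq hi ?_
  rw [cycleIndex, ZMod.natCast_zmod_val, mul_assoc, mul_comm _ (p : ZMod (p + q)),
    natCast_mul_inv_eq_one hcop]
  ring

lemma cycleIndex_lt [NeZero (p + q)] (i : ℕ) : cycleIndex p q i < p + q :=
  ZMod.val_lt _

lemma cycleIndex_inj (hcop : Nat.Coprime p q) {i j : ℕ} (hi : i < p + q) (hj : j < p + q) :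
    cycleIndex p q i = cycleIndex p q j ↔ i = j :=
  ⟨fun h => by rw [← cyclePoint_cycleIndex hcop hi, h, cyclePoint_cycleIndex hcop hj],
    congrArg _⟩

lemma cycleIndex_add_sub_one (hcop : Nat.Coprime p q) (h : 0 < p + q) :
    cycleIndex p q (p + q - 1) = 0 := by
  rw [← cyclePoint_zero h, cycleIndex_cyclePoint hcop h]

lemma cycleIndex_sub_one_left (hcop : Nat.Coprime p q) (hp : 0 < p) (hq : 0 < q) :
    cycleIndex p q (p - 1) = 1 := by
  rw [← cyclePoint_one hp hq, cycleIndex_cyclePoint hcop (by omega)]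

lemma cycleIndex_sub_one_right (hcop : Nat.Coprime p q) (hp : 0 < p) (hq : 0 < q) :
    cycleIndex p q (q - 1) = p + q - 1 := by
  rw [← cyclePoint_sub_one_of_mul_eq_zero (p := p) (m := p + q) (by omega) hq
    (by rw [ZMod.natCast_self, zero_mul]),
    cycleIndex_cyclePoint hcop (by omega)]

lemma cycleIndex_reflect_lt_iff (hcop : Nat.Coprime p q) {n i : ℕ} (hn : n + 2 = p + q)
    (hi : i < n) :
    cycleIndex p q (n - 1 - i) < cycleIndex p q n ↔ cycleIndex p q i < cycleIndex p q n := by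
  have : NeZero (p + q) := ⟨by omega⟩
  set c := (p : ZMod (p + q))⁻¹
  have hsum := congrArg (Nat.cast : ℕ → ZMod (p + q)) (show n - 1 - i + (i + 1) = n by omega)
  push_cast at hsum
  have hrefl : ((n - 1 - i : ℕ) + 1 : ZMod (p + q)) * c = (n + 1) * c - (i + 1) * c := by
    linear_combination c * hsum
  have h0 : ((i : ZMod (p + q)) + 1) * c ≠ 0 := fun h => by
    have := (cycleIndex_inj hcop (i := i) (j := p + q - 1) (by omega) (by omega)).1
      (by rw [cycleIndex_add_sub_one hcop (by omega), cycleIndex, h, ZMod.val_zero])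
    omega
  have hn' : ((i : ZMod (p + q)) + 1) * c ≠ (n + 1) * c := fun h => by
    have := (cycleIndex_inj hcop (i := i) (j := n) (by omega) (by omega)).1
      (by rw [cycleIndex, cycleIndex, h])
    omega
  unfold cycleIndex
  rw [hrefl]
  exact ZMod.val_sub_lt_val_iff h0 hn'

end Cycle

section Word

variable {α : Type*} {w : List α} {p q : ℕ}

lemma hasPeriod_iff_take_eq_drop (hp : 0 < p) :
    HasPeriod w p ↔ w.take (w.length - p) = w.drop p := by
  constructor
  · intro h
    refine List.ext_getElem? fun i => ?_
    rw [List.getElem?_take, List.getElem?_drop]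
    split_ifs with hi
    · exact h.2 i (p + i) (by omega) (by omega) (by simp)
    · exact (List.getElem?_eq_none (by omega)).symm
  · intro h
    have step : ∀ i, p ≤ i → i < w.length → w[i - p]? = w[i]? := fun i hpi hi => by
      have := congrArg (·[i - p]?) h
      simpa only [List.getElem?_take, List.getElem?_drop, Nat.add_sub_cancel' hpi,
        if_pos (show i - p < w.length - p by omega)] using this
    have hmod : ∀ i, i < w.length → w[i % p]? = w[i]? := fun i => by
      induction i using Nat.strong_induction_on with
      | _ i ih =>
        intro hi
        rcases lt_or_ge i p with hip | hip
        · rw [Nat.mod_eq_of_lt hip]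
        · rw [Nat.mod_eq_sub_mod hip, ih (i - p) (by omega) (by omega), step i hip hi]
    exact ⟨hp, fun i j hi hj hij => by rw [← hmod i hi, hij, hmod j hj]⟩

lemma hasPeriod_replicate (a : α) (n : ℕ) (hp : 0 < p) :
    HasPeriod (List.replicate n a) p :=
  ⟨hp, fun i j hi hj _ => by simp_all⟩

lemma hasPeriod_one_iff [Nonempty α] : HasPeriod w 1 ↔ ∃ a n, w = List.replicate n a := by
  refine ⟨fun h => ?_, fun ⟨a, n, hw⟩ => hw ▸ hasPeriod_replicate a n one_pos⟩
  rcases w with _ | ⟨a, t⟩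
  · exact ⟨Classical.arbitrary α, 0, rfl⟩
  refine ⟨a, _, List.eq_replicate_iff.2 ⟨rfl, fun b hb => ?_⟩⟩
  obtain ⟨i, hi, rfl⟩ := List.mem_iff_getElem.1 hb
  simpa [List.getElem?_eq_getElem hi] using
    h.2 i 0 hi (by simp) (by rw [Nat.mod_one, Nat.mod_one])

lemma getElem?_cyclePoint_succ (hp : HasPeriod w p) (hq : HasPeriod w q)
    (hN : w.length + 2 = p + q) {k : ℕ} (hk : cyclePoint p q k < w.length)
    (hk' : cyclePoint p q (k + 1) < w.length) :
    w[cyclePoint p q k]? = w[cyclePoint p q (k + 1)]? := by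
  have : NeZero (p + q) := ⟨by omega⟩
  set x := cyclePoint p q k
  set y := cyclePoint p q (k + 1)
  have hxy : (y : ZMod (p + q)) = (x + p : ℕ) := by
    simp only [y, x, natCast_cyclePoint, Nat.cast_add, Nat.cast_succ]
    ring
  rw [ZMod.natCast_eq_natCast_iff', Nat.mod_eq_of_lt (by omega)] at hxy
  rcases lt_or_ge (x + p) (p + q) with hlt | hge
  · rw [Nat.mod_eq_of_lt hlt] at hxy
    exact hp.2 x y hk hk' (by simp [hxy])
  · rw [Nat.mod_eq_sub_mod hge, Nat.mod_eq_of_lt (by omega)] at hxy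
    have hx : x = y + q := by omega
    exact (hq.2 y x hk' hk (by rw [hx, Nat.add_mod_right])).symm

lemma getElem?_cyclePoint_eq (hp : HasPeriod w p) (hq : HasPeriod w q)
    (hN : w.length + 2 = p + q) {m n : ℕ} (hmn : m ≤ n)
    (h : ∀ k, m ≤ k → k ≤ n → cyclePoint p q k < w.length) :
    w[cyclePoint p q m]? = w[cyclePoint p q n]? := by
  induction n, hmn using Nat.le_induction with
  | base => rfl
  | succ n hmn ih =>
    rw [ih fun k hk hkn => h k hk (by omega)]
    exact getElem?_cyclePoint_succ hp hq hN (h n hmn (by omega)) (h (n + 1) (by omega) le_rfl)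

-- The positions `w.length + 1` and `w.length` missing from `w` have cycle indices `0` and
-- `cycleIndex p q w.length`; the two arcs between them are the two sides of the latter.
lemma getElem?_eq_of_cycleIndex_lt_iff (hp : HasPeriod w p) (hq : HasPeriod w q)
    (hN : w.length + 2 = p + q) (hcop : Nat.Coprime p q) {i j : ℕ} (hi : i < w.length)
    (hj : j < w.length)
    (h : cycleIndex p q i < cycleIndex p q w.length ↔
      cycleIndex p q j < cycleIndex p q w.length) :
    w[i]? = w[j]? := by
  wlog hij : cycleIndex p q i ≤ cycleIndex p q j generalizing i j
  · exact (this hj hi h.symm (by omega)).symm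
  have : NeZero (p + q) := ⟨by omega⟩
  have hiT : cycleIndex p q i ≠ cycleIndex p q w.length := by
    rw [Ne, cycleIndex_inj hcop (by omega) (by omega)]; omega
  have hjT : cycleIndex p q j ≠ cycleIndex p q w.length := by
    rw [Ne, cycleIndex_inj hcop (by omega) (by omega)]; omega
  have hi0 : cycleIndex p q i ≠ 0 := by
    rw [← cycleIndex_add_sub_one hcop (by omega), Ne, cycleIndex_inj hcop (by omega) (by omega)]
    omega
  rw [← cyclePoint_cycleIndex hcop (i := i) (by omega),
    ← cyclePoint_cycleIndex hcop (i := j) (by omega)]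
  refine getElem?_cyclePoint_eq hp hq hN hij fun k hik hkj => ?_
  by_contra hk
  have hkN : k < p + q := (hkj.trans_lt (cycleIndex_lt j))
  have hkk := cycleIndex_cyclePoint hcop hkN
  have := cyclePoint_lt (p := p) (q := q) k
  rcases (by omega : cyclePoint p q k = w.length ∨ cyclePoint p q k = p + q - 1) with hw | hw
  · rw [hw] at hkk
    omega
  · rw [hw, cycleIndex_add_sub_one hcop (by omega)] at hkk
    omega

theorem reverse_eq_self_of_coprime (hp : HasPeriod w p) (hq : HasPeriod w q)
    (hN : w.length + 2 = p + q) (hcop : Nat.Coprime p q) : w.reverse = w := by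
  refine List.ext_getElem? fun i => ?_
  rcases lt_or_ge i w.length with hi | hi
  · rw [List.getElem?_reverse hi]
    exact getElem?_eq_of_cycleIndex_lt_iff hp hq hN hcop (by omega) hi
      (cycleIndex_reflect_lt_iff hcop hN hi)
  · rw [List.getElem?_eq_none (by simpa using hi), List.getElem?_eq_none hi]

lemma hasPeriod_one_of_getElem?_eq (hp : HasPeriod w p) (hq : HasPeriod w q)
    (hN : w.length + 2 = p + q) (hcop : Nat.Coprime p q) (hp2 : 2 ≤ p) (hq2 : 2 ≤ q)
    (h : w[p - 2]? = w[p - 1]?) : HasPeriod w 1 := by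
  have : NeZero (p + q) := ⟨by omega⟩
  set T := cycleIndex p q w.length
  have hT0 : T ≠ 0 := by
    rw [← cycleIndex_add_sub_one hcop (by omega), Ne, cycleIndex_inj hcop (by omega) (by omega)]
    omega
  have hT1 : T ≠ 1 := by
    rw [← cycleIndex_sub_one_left hcop (by omega) (by omega), Ne,
      cycleIndex_inj hcop (by omega) (by omega)]
    omega
  have hlow : cycleIndex p q (p - 1) < T := by
    rw [cycleIndex_sub_one_left hcop (by omega) (by omega)]; omega
  have hhigh : ¬ cycleIndex p q (p - 2) < T := by
    have := cycleIndex_reflect_lt_iff hcop hN (i := p - 2) (by omega)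
    rw [show w.length - 1 - (p - 2) = q - 1 by omega,
      cycleIndex_sub_one_right hcop (by omega) (by omega)] at this
    have := cycleIndex_lt (p := p) (q := q) w.length
    omega
  have hconst : ∀ i, i < w.length → w[i]? = w[p - 1]? := fun i hi => by
    by_cases hiT : cycleIndex p q i < T
    · exact getElem?_eq_of_cycleIndex_lt_iff hp hq hN hcop hi (by omega) (by tauto)
    · rw [← h]
      exact getElem?_eq_of_cycleIndex_lt_iff hp hq hN hcop hi (by omega) (by tauto)
  exact ⟨one_pos, fun i j hi hj _ => (hconst i hi).trans (hconst j hj).symm⟩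

lemma List.eq_take_append_drop_of_getElem? {l : List α} {k : ℕ} {x y : α}
    (hx : l[k]? = some x) (hy : l[k + 1]? = some y) :
    l = l.take k ++ [x, y] ++ l.drop (k + 2) := by
  obtain ⟨hk, rfl⟩ := List.getElem?_eq_some_iff.1 hx
  obtain ⟨hk', rfl⟩ := List.getElem?_eq_some_iff.1 hy
  conv_lhs => rw [← List.take_append_drop k l, List.drop_eq_getElem_cons hk,
    List.drop_eq_getElem_cons hk']
  simp

lemma palindromes_of_reverse_eq_self {P Q : List α} {x y : α} (hw : w = P ++ [x, y] ++ Q)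
    (hpal : w.reverse = w) (hQ : w.take Q.length = Q) (hP : w.drop (Q.length + 2) = P) :
    P.reverse = P ∧ Q.reverse = Q ∧ w = Q ++ [y, x] ++ P := by
  have hrev : w = Q.reverse ++ [y, x] ++ P.reverse := by
    rw [← hpal, hw]; simp
  have hQ' : Q.reverse = Q := calc
    Q.reverse = w.take Q.length := by rw [hrev]; simp
    _ = Q := hQ
  have hP' : P.reverse = P := calc
    P.reverse = w.drop (Q.length + 2) := by
      rw [hrev, show Q.length + 2 = (Q.reverse ++ [y, x]).length by simp, List.drop_left]
    _ = P := hP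
  exact ⟨hP', hQ', by rw [hrev, hP', hQ']⟩

theorem hasPeriod_one_or_exists_palindromes (hp : HasPeriod w p) (hq : HasPeriod w q)
    (hN : w.length + 2 = p + q) (hcop : Nat.Coprime p q) :
    HasPeriod w 1 ∨ ∃ (x y : α) (P Q : List α), x ≠ y ∧ P.reverse = P ∧
      Q.reverse = Q ∧ w = P ++ [x, y] ++ Q ∧ w = Q ++ [y, x] ++ P := by
  obtain rfl | hp2 : p = 1 ∨ 2 ≤ p := by have := hp.1; omega
  · exact Or.inl hp
  obtain rfl | hq2 : q = 1 ∨ 2 ≤ q := by have := hq.1; omega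
  · exact Or.inl hq
  by_cases hxy : w[p - 2]? = w[p - 1]?
  · exact Or.inl (hasPeriod_one_of_getElem?_eq hp hq hN hcop hp2 hq2 hxy)
  right
  obtain ⟨x, hx⟩ : ∃ x, w[p - 2]? = some x := ⟨_, List.getElem?_eq_getElem (by omega)⟩
  obtain ⟨y, hy⟩ : ∃ y, w[p - 1]? = some y := ⟨_, List.getElem?_eq_getElem (by omega)⟩
  have hw := List.eq_take_append_drop_of_getElem? hx (by rwa [show p - 2 + 1 = p - 1 by omega])
  rw [show p - 2 + 2 = p by omega] at hw
  have hQ : w.take (w.drop p).length = w.drop p := by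
    rw [List.length_drop, (hasPeriod_iff_take_eq_drop hp.1).1 hp]
  have hP : w.drop ((w.drop p).length + 2) = w.take (p - 2) := by
    rw [List.length_drop, show w.length - p + 2 = q by omega,
      ← (hasPeriod_iff_take_eq_drop hq.1).1 hq, show w.length - q = p - 2 by omega]
  obtain ⟨hP', hQ', hw'⟩ :=
    palindromes_of_reverse_eq_self hw (reverse_eq_self_of_coprime hp hq hN hcop) hQ hP
  exact ⟨x, y, _, _, fun h => hxy (by rw [hx, hy, h]), hP', hQ', hw, hw'⟩

lemma coprime_of_getElem?_ne (hp : HasPeriod w p) (hq : HasPeriod w q)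
    (hN : w.length + 2 = p + q) (hne : w[p - 1]? ≠ w[q - 1]?) : Nat.Coprime p q := by
  have : NeZero (p + q) := ⟨by omega⟩
  by_contra hcop
  set m := addOrderOf (p : ZMod (p + q))
  have hp0 : (p : ZMod (p + q)) ≠ 0 := by
    rw [Ne, ZMod.natCast_eq_zero_iff]
    intro h
    have := Nat.le_of_dvd hp.1 h
    have := hq.1
    omega
  have hm : 2 ≤ m := by
    have := addOrderOf_pos (p : ZMod (p + q))
    have : m ≠ 1 := by rwa [Ne, AddMonoid.addOrderOf_eq_one_iff]
    omega
  apply hne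
  rw [← cyclePoint_one hp.1 hq.1, ← cyclePoint_sub_one_of_mul_eq_zero (m := m) (by omega) hq.1
    (by rw [← nsmul_eq_mul, addOrderOf_nsmul_eq_zero])]
  refine getElem?_cyclePoint_eq hp hq hN (by omega) fun k hk hkm => ?_
  by_contra hkw
  have hpt := natCast_cyclePoint (p := p) (q := q) k
  have := cyclePoint_lt (p := p) (q := q) k
  rcases (by omega : cyclePoint p q k + 2 = p + q ∨ cyclePoint p q k + 1 = p + q) with h | h
  · have h' : ((cyclePoint p q k + 2 : ℕ) : ZMod (p + q)) = 0 := by rw [h, ZMod.natCast_self]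
    push_cast at h'
    rw [hpt] at h'
    have hunit : IsUnit (p : ZMod (p + q)) :=
      IsUnit.of_mul_eq_one (-k : ZMod (p + q)) (by linear_combination -h')
    exact hcop (Nat.coprime_self_add_right.1 ((ZMod.isUnit_iff_coprime p (p + q)).1 hunit))
  · have h' : ((cyclePoint p q k + 1 : ℕ) : ZMod (p + q)) = 0 := by rw [h, ZMod.natCast_self]
    push_cast at h'
    rw [hpt, sub_add_cancel, ← nsmul_eq_mul] at h'
    exact nsmul_ne_zero_of_lt_addOrderOf (by omega) (by omega) h'

theorem coprime_and_hasPeriod_of_eq_append {P Q : List α} {x y : α} (hxy : x ≠ y)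
    (h₁ : w = P ++ [x, y] ++ Q) (h₂ : w = Q ++ [y, x] ++ P) :
    Nat.Coprime (P.length + 2) (Q.length + 2) ∧ HasPeriod w (P.length + 2) ∧
      HasPeriod w (Q.length + 2) := by
  have hlen : w.length = P.length + Q.length + 2 := by
    rw [h₁]
    simp only [List.length_append, List.length_cons, List.length_nil]
    omega
  have hp : HasPeriod w (P.length + 2) := by
    rw [hasPeriod_iff_take_eq_drop (by omega), show w.length - (P.length + 2) = Q.length by omega]
    calc w.take Q.length = Q := by rw [h₂, List.append_assoc, List.take_left]
      _ = w.drop (P.length + 2) := by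
        rw [h₁, show P.length + 2 = (P ++ [x, y]).length by simp, List.drop_left]
  have hq : HasPeriod w (Q.length + 2) := by
    rw [hasPeriod_iff_take_eq_drop (by omega), show w.length - (Q.length + 2) = P.length by omega]
    calc w.take P.length = P := by rw [h₁, List.append_assoc, List.take_left]
      _ = w.drop (Q.length + 2) := by
        rw [h₂, show Q.length + 2 = (Q ++ [y, x]).length by simp, List.drop_left]
  refine ⟨coprime_of_getElem?_ne hp hq (by omega) ?_, hp, hq⟩
  rw [Nat.add_sub_assoc one_le_two, Nat.add_sub_assoc one_le_two]
  nth_rw 1 [h₁]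
  rw [h₂]
  simpa using hxy.symm

end Word

/-- A binary word is central (two coprime periods `p, q` and length `p + q - 2`)
iff it is a power of a single letter or equals `P01Q = Q10P` for palindromes `P, Q`. -/
theorem central_characterization (w : List Bool) :
    (∃ p q : ℕ, Nat.Coprime p q ∧ HasPeriod w p ∧ HasPeriod w q ∧
        w.length = p + q - 2) ↔
      ((∃ (a : Bool) (n : ℕ), w = List.replicate n a) ∨
        ∃ P Q : List Bool, P.reverse = P ∧ Q.reverse = Q ∧
          w = P ++ [false, true] ++ Q ∧ w = Q ++ [true, false] ++ P) := by
  constructor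
  · rintro ⟨p, q, hcop, hp, hq, hlen⟩
    have hN : w.length + 2 = p + q := by have := hp.1; have := hq.1; omega
    rcases hasPeriod_one_or_exists_palindromes hp hq hN hcop with
      h | ⟨x, y, P, Q, hxy, hP, hQ, h₁, h₂⟩
    · exact Or.inl (hasPeriod_one_iff.1 h)
    · right
      cases x <;> cases y <;> simp only [ne_eq, not_true_eq_false] at hxy
      · exact ⟨P, Q, hP, hQ, h₁, h₂⟩
      · exact ⟨Q, P, hQ, hP, h₂, h₁⟩
  · rintro (⟨a, n, rfl⟩ | ⟨P, Q, -, -, h₁, h₂⟩)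
    · exact ⟨1, n + 1, Nat.coprime_one_left _, hasPeriod_replicate a n one_pos,
        hasPeriod_replicate a n n.succ_pos, by rw [List.length_replicate]; omega⟩
    · obtain ⟨hcop, hp, hq⟩ := coprime_and_hasPeriod_of_eq_append Bool.false_ne_true h₁ h₂
      refine ⟨_, _, hcop, hp, hq, ?_⟩
      rw [h₁]
      simp only [List.length_append, List.length_cons, List.length_nil]
      omega
end

section
/- A binary word w is a strictly bispecial Sturmian word (i.e., 0w0, 0w1, 1w0, and 1w1 are all balanced) if and only if w is a central word. -/
/-!
Let `n = |w| + 2`, and let `g m` count the ones among the first `m` letters of `0w1`. If `0w1` and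
`1w0` are balanced, comparing their windows shows that every cyclic window of length `k` of `0w1`
contains `g k` or `g k + 1` ones. These counts average to `k c / n`, where `c = g n`, and the
window starting at `0` has exactly `g k` ones, so `g k = ⌊k c / n⌋`; the symmetry
`g k + g (n - k) + 1 = c` then forces `c` to be coprime to `n`. Hence `0w1` is the Christoffel word
of slope `c / n`, whose interior has the coprime periods `p = c⁻¹ mod n` and `n - p`.

Conversely, let `w` have coprime periods `p`, `q` and length `n - 2`, where `n = p + q`, and let
`u = p⁻¹ mod n`. Moving an index `i` to `(i + p) mod n` keeps the letter of `w` and raises the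
residue `(i + 1) u mod n` by one; the residues of the indices of `w` fill the two arcs `[1, n - u)`
and `(n - u, n)`, so `w` is constant on each arc. The same arcs cut the interior of the Christoffel
word of slope `u / n` into its zeros and its ones, so `w` is that word, its complement, or constant,
and the formula `⌊m u / n⌋` for its prefix counts shows that all of `a w b` are balanced.
-/

def prefixOnes (X : List Bool) (m : ℕ) : ℕ := (X.take m).count true

theorem prefixOnes_add (X : List Bool) (s k : ℕ) :
    prefixOnes X (s + k) = prefixOnes X s + ((X.drop s).take k).count true := by
  rw [prefixOnes, prefixOnes, List.take_add, List.count_append]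

theorem prefixOnes_succ {X : List Bool} {m : ℕ} (hm : m < X.length) :
    prefixOnes X (m + 1) = prefixOnes X m + X[m].toNat := by
  rw [prefixOnes_add, List.take_one, List.head?_drop, List.getElem?_eq_getElem hm]
  cases X[m] <;> rfl

theorem prefixOnes_of_length_le {X : List Bool} {m : ℕ} (h : X.length ≤ m) :
    prefixOnes X m = X.count true := by
  rw [prefixOnes, List.take_of_length_le h]

theorem prefixOnes_cons_append_succ (a b : Bool) {w : List Bool} {m : ℕ} (hm : m ≤ w.length) :
    prefixOnes ([a] ++ w ++ [b]) (m + 1) = a.toNat + prefixOnes w m := by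
  simp only [prefixOnes, List.cons_append, List.take_succ_cons, List.count_cons,
    List.nil_append, List.take_append_of_le_length hm]
  cases a <;> simp [add_comm]

theorem List.eq_of_prefixOnes_eq {X Y : List Bool} (hlen : X.length = Y.length)
    (h : ∀ m ≤ X.length, prefixOnes X m = prefixOnes Y m) : X = Y := by
  refine List.ext_getElem hlen fun m hX hY => ?_
  have := h (m + 1) hX
  rw [prefixOnes_succ hX, prefixOnes_succ hY, h m hX.le, Nat.add_left_cancel_iff] at this
  revert this
  cases X[m] <;> cases Y[m] <;> simp

theorem List.IsInfix.exists_prefixOnes {u X : List Bool} (h : u <:+: X) :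
    ∃ s, s + u.length ≤ X.length ∧
      prefixOnes X (s + u.length) = prefixOnes X s + u.count true := by
  obtain ⟨x, y, rfl⟩ := h
  exact ⟨x.length, by simp, by simp [prefixOnes_add]⟩

theorem isBalanced_iff_prefixOnes {X : List Bool} :
    IsBalanced X ↔ ∀ s t k, s + k ≤ X.length → t + k ≤ X.length →
      prefixOnes X (s + k) + prefixOnes X t ≤ prefixOnes X (t + k) + prefixOnes X s + 1 := by
  constructor
  · intro hX s t k hs ht
    have window_infix (r : ℕ) : (X.drop r).take k <:+: X :=
      (List.take_prefix _ _).isInfix.trans (List.drop_suffix _ _).isInfix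
    have hb := hX _ _ (window_infix s) (window_infix t) (by simp; omega)
    rw [prefixOnes_add, prefixOnes_add]
    rw [abs_le] at hb
    omega
  · intro hX u v hu hv huv
    obtain ⟨s, hs, hsu⟩ := hu.exists_prefixOnes
    obtain ⟨t, ht, htv⟩ := hv.exists_prefixOnes
    have h₁ := hX s t _ hs (huv ▸ ht)
    have h₂ := hX t s _ (huv ▸ ht) hs
    rw [huv] at hsu h₁ h₂
    rw [abs_le]
    omega

theorem isBalanced_of_window_bounds {X : List Bool} (φ : ℕ → ℕ)
    (h : ∀ s k, s + k ≤ X.length → k < X.length →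
      φ k + prefixOnes X s ≤ prefixOnes X (s + k) ∧
        prefixOnes X (s + k) ≤ φ k + prefixOnes X s + 1) :
    IsBalanced X := by
  refine isBalanced_iff_prefixOnes.mpr fun s t k hs ht => ?_
  by_cases hk : k < X.length
  · have := h s k hs hk
    have := h t k ht hk
    omega
  · obtain rfl : s = 0 := by omega
    obtain rfl : t = 0 := by omega
    omega

theorem IsBalanced.map_not {X : List Bool} (h : IsBalanced X) : IsBalanced (X.map not) := by
  intro u v hu hv huv
  have hu' : u.map not <:+: X := by simpa [Function.comp_def] using hu.map not
  have hv' : v.map not <:+: X := by simpa [Function.comp_def] using hv.map not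
  have hb := h _ _ hu' hv' (by simpa using huv)
  have hcount (l : List Bool) : (l.map not).count true + l.count true = l.length := by
    induction l with
    | nil => rfl
    | cons a l ih => cases a <;> simp <;> omega
  have := hcount u
  have := hcount v
  rw [abs_le] at hb ⊢
  omega

namespace Nat

theorem div_add_div_add_one_of_dvd_add {a b c : ℕ} (hab : c ∣ a + b) (ha : ¬ c ∣ a) :
    a / c + b / c + 1 = (a + b) / c := by
  have hc : 0 < c := Nat.pos_of_ne_zero fun h => by simp_all
  rw [Nat.add_div hc, if_pos]
  by_contra hlt
  have h := Nat.add_mod_of_add_mod_lt (a := a) (b := b) (c := c) (by omega)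
  rw [Nat.dvd_iff_mod_eq_zero.mp hab] at h
  exact ha (Nat.dvd_of_mod_eq_zero (by omega))

section Residues

variable {n p u : ℕ}

theorem mod_add_succ_mul_mod (hpu : p * u ≡ 1 [MOD n]) (i : ℕ) :
    ((i + p) % n + 1) * u % n = ((i + 1) * u % n + 1) % n :=
  calc ((i + p) % n + 1) * u ≡ (i + p + 1) * u [MOD n] :=
        ((Nat.mod_modEq _ _).add_right 1).mul_right u
    _ = (i + 1) * u + p * u := by ring
    _ ≡ (i + 1) * u % n + 1 [MOD n] := (Nat.mod_modEq _ _).symm.add hpu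

theorem add_two_lt_iff_succ_mul_mod (hco : u.Coprime n) (hu : 0 < u) (hun : u < n) {i : ℕ}
    (hi : i < n) : i + 2 < n ↔ (i + 1) * u % n ≠ 0 ∧ (i + 1) * u % n + u ≠ n := by
  have hdvd (k : ℕ) : n ∣ k * u ↔ n ∣ k := hco.symm.dvd_mul_right
  have hnext : ((i + 1) * u % n + u) % n = (i + 2) * u % n := by
    rw [Nat.add_mod, Nat.mod_mod, ← Nat.add_mod, show (i + 2) * u = (i + 1) * u + u by ring]
  have hlt := Nat.mod_lt ((i + 1) * u) (show 0 < n by omega)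
  constructor
  · intro h
    refine ⟨fun h0 => ?_, fun hn => ?_⟩
    · have := Nat.le_of_dvd (by omega) ((hdvd _).mp (Nat.dvd_of_mod_eq_zero h0))
      omega
    · rw [hn, Nat.mod_self] at hnext
      have := Nat.le_of_dvd (by omega) ((hdvd _).mp (Nat.dvd_of_mod_eq_zero hnext.symm))
      omega
  · rintro ⟨h0, hn⟩
    by_contra h
    rcases (show i + 1 = n ∨ i + 2 = n by omega) with h1 | h2
    · exact h0 (by rw [h1, Nat.mul_mod_right])
    · rw [h2, Nat.mul_mod_right] at hnext
      obtain ⟨c, hc⟩ := Nat.dvd_of_mod_eq_zero hnext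
      rcases c with _ | _ | c <;> [omega; omega; nlinarith]

theorem eq_of_succ_mul_mod_eq (hco : u.Coprime n) {i j : ℕ} (hi : i + 1 < n) (hj : j + 1 < n)
    (h : (i + 1) * u % n = (j + 1) * u % n) : i = j := by
  have := Nat.ModEq.cancel_right_of_coprime (Nat.coprime_comm.mp hco) h
  rw [Nat.ModEq, Nat.mod_eq_of_lt hi, Nat.mod_eq_of_lt hj] at this
  omega

theorem coprime_of_mul_modEq_one_right (hpu : p * u ≡ 1 [MOD n]) : u.Coprime n :=
  Nat.coprime_of_mul_modEq_one p (by rwa [mul_comm])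

theorem pos_of_mul_modEq_one (hpu : p * u ≡ 1 [MOD n]) (hn : 2 ≤ n) : 0 < u := by
  refine Nat.pos_of_ne_zero fun hu => ?_
  have := Nat.coprime_zero_left n |>.mp (hu ▸ coprime_of_mul_modEq_one_right hpu)
  omega

end Residues

end Nat

section Periods

variable {α : Type*} {w : List α} {p q : ℕ}

theorem HasPeriod.getElem?_add_s11 (hp : HasPeriod w p) {i : ℕ} (h : i + p < w.length) :
    w[i]? = w[i + p]? :=
  hp.2 i (i + p) (by omega) h (by simp)

theorem hasPeriod_of_getElem?_add (hp : 0 < p)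
    (h : ∀ i, i + p < w.length → w[i]? = w[i + p]?) : HasPeriod w p := by
  have hmul (t : ℕ) : ∀ i, i + p * t < w.length → w[i]? = w[i + p * t]? := by
    induction t with
    | zero => simp
    | succ t ih =>
      intro i hi
      rw [ih i (by nlinarith), h _ (by rw [Nat.mul_succ] at hi; omega), Nat.mul_succ, add_assoc]
  refine ⟨hp, fun i j hi hj hij => ?_⟩
  wlog hle : i ≤ j generalizing i j
  · exact (this j i hj hi hij.symm (by omega)).symm
  obtain ⟨t, ht⟩ := (Nat.modEq_iff_dvd' hle).mp hij
  rw [hmul t i (by omega), ← ht, Nat.add_sub_cancel' hle]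

theorem hasPeriod_and_hasPeriod_iff (hp : 0 < p) (hq : 0 < q) (hlen : w.length ≤ p + q) :
    HasPeriod w p ∧ HasPeriod w q ↔
      ∀ i, i < w.length → (i + p) % (p + q) < w.length → w[i]? = w[(i + p) % (p + q)]? := by
  constructor
  · rintro ⟨hwp, hwq⟩ i hi hi'
    rcases (i + p).lt_or_ge (p + q) with h | h
    · rw [Nat.mod_eq_of_lt h] at hi' ⊢
      exact hwp.getElem?_add_s11 hi'
    · have hmod : (i + p) % (p + q) + q = i := by
        rw [Nat.mod_eq_sub_mod h, Nat.mod_eq_of_lt (by omega)]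
        omega
      rw [hwq.getElem?_add_s11 (i := (i + p) % (p + q)) (by omega), hmod]
  · intro hrot
    refine ⟨hasPeriod_of_getElem?_add hp fun i hi => ?_,
      hasPeriod_of_getElem?_add hq fun i hi => ?_⟩
    · have := hrot i (by omega) (by rwa [Nat.mod_eq_of_lt (by omega)])
      rwa [Nat.mod_eq_of_lt (by omega)] at this
    · have hmod : (i + q + p) % (p + q) = i := by
        rw [show i + q + p = i + (p + q) by ring, Nat.add_mod_right, Nat.mod_eq_of_lt (by omega)]
      have := hrot (i + q) hi (by rw [hmod]; omega)
      rw [this, hmod]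

end Periods

/-- The letter at `i` is `⌊(i + 2) u / n⌋ - ⌊(i + 1) u / n⌋`: for `0 < u < n` this is the
Christoffel word of slope `u / n` without its first and last letter. -/
def centralWord (u n : ℕ) : List Bool :=
  (List.range (n - 2)).map fun i => decide (n ≤ (i + 1) * u % n + u)

section CentralWord

variable {u n : ℕ}

@[simp]
theorem length_centralWord : (centralWord u n).length = n - 2 := by
  simp [centralWord]

theorem getElem_centralWord {i : ℕ} (h : i < (centralWord u n).length) :
    (centralWord u n)[i] = decide (n ≤ (i + 1) * u % n + u) := by
  simp [centralWord]

theorem prefixOnes_centralWord (hun : u < n) {m : ℕ} (hm : m ≤ n - 2) :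
    prefixOnes (centralWord u n) m = (m + 1) * u / n := by
  induction m with
  | zero => simp [prefixOnes, Nat.div_eq_of_lt hun]
  | succ m ih =>
    have hm' : m < (centralWord u n).length := by simp; omega
    rw [prefixOnes_succ hm', ih (by omega), getElem_centralWord,
      show (m + 1 + 1) * u = (m + 1) * u + u by ring, Nat.add_div (by omega),
      Nat.div_eq_of_lt hun, Nat.mod_eq_of_lt hun]
    by_cases h : n ≤ (m + 1) * u % n + u <;> simp [h]

theorem prefixOnes_cons_centralWord_append (a b : Bool) (hun : u < n) {m : ℕ}
    (hm : 0 < m) (hmn : m < n) :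
    prefixOnes ([a] ++ centralWord u n ++ [b]) m = a.toNat + m * u / n := by
  obtain ⟨m, rfl⟩ : ∃ m', m = m' + 1 := ⟨m - 1, by omega⟩
  rw [prefixOnes_cons_append_succ a b (by simp; omega), prefixOnes_centralWord hun (by omega)]

theorem count_cons_centralWord_append (a b : Bool) (hu : 0 < u) (hun : u < n) :
    ([a] ++ centralWord u n ++ [b]).count true = a.toNat + b.toNat + u - 1 := by
  have hlast : (n - 2 + 1) * u / n = u - 1 := by
    refine Nat.div_eq_of_lt_le ?_ ?_ <;>
      · zify [show 2 ≤ n by omega, show 1 ≤ u by omega]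
        nlinarith
  have := prefixOnes_centralWord hun (le_refl (n - 2))
  rw [prefixOnes_of_length_le (by simp)] at this
  simp only [List.count_append, this]
  cases a <;> cases b <;> simp <;> omega

theorem isBalanced_cons_centralWord_append (a b : Bool) (hco : u.Coprime n) (hu : 0 < u)
    (hun : u < n) : IsBalanced ([a] ++ centralWord u n ++ [b]) := by
  have hlen : ([a] ++ centralWord u n ++ [b]).length = n := by simp; omega
  have hcount := count_cons_centralWord_append a b hu hun
  rw [← prefixOnes_of_length_le hlen.le] at hcount
  have hinner (m : ℕ) := prefixOnes_cons_centralWord_append (m := m) a b hun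
  refine isBalanced_of_window_bounds (fun k => k * u / n) fun s k hsk hk => ?_
  rw [hlen] at hsk hk
  have ha := a.toNat_le
  have hb := b.toNat_le
  rcases k.eq_zero_or_pos with rfl | hk0
  · simp
  rcases s.eq_zero_or_pos with rfl | hs0
  · rw [zero_add, hinner k hk0 hk]
    simp only [prefixOnes, List.take_zero, List.count_nil]
    omega
  rw [hinner s hs0 (by omega)]
  rcases (s + k).lt_or_ge n with hlt | hge
  · rw [hinner (s + k) (by omega) hlt, Nat.add_mul]
    have := Nat.div_add_div_le_add_div (x := s * u) (y := k * u) (z := n)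
    have := Nat.add_div_le_div_add_div_add_one (s * u) (k * u) n
    omega
  · have hsum : k * u + s * u = n * u := by rw [← Nat.add_mul, (by omega : k + s = n)]
    have hndvd : ¬ n ∣ k * u := fun h =>
      absurd (Nat.le_of_dvd hk0 (hco.symm.dvd_of_dvd_mul_right h)) (by omega)
    have := Nat.div_add_div_add_one_of_dvd_add (hsum ▸ Nat.dvd_mul_right n u) hndvd
    rw [hsum, Nat.mul_div_cancel_left u (by omega)] at this
    rw [(by omega : s + k = n), hcount]
    omega

end CentralWord

section Rotation

variable {n p u : ℕ}

theorem getElem?_centralWord_mod_add (hpu : p * u ≡ 1 [MOD n]) (hun : u < n) {i : ℕ}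
    (hi : i < n - 2) (hi' : (i + p) % n < n - 2) :
    (centralWord u n)[i]? = (centralWord u n)[(i + p) % n]? := by
  have hco := Nat.coprime_of_mul_modEq_one_right hpu
  have hu := Nat.pos_of_mul_modEq_one hpu (by omega)
  have valid (k : ℕ) (hk : k < n) := Nat.add_two_lt_iff_succ_mul_mod hco hu hun hk
  have hvj := (valid ((i + p) % n) (Nat.mod_lt _ (by omega))).mp (by omega)
  have hstep := Nat.mod_add_succ_mul_mod hpu i
  have hlt := Nat.mod_lt ((i + 1) * u) (show 0 < n by omega)
  have hne : (i + 1) * u % n + 1 ≠ n := fun h => hvj.1 (by rw [hstep, h, Nat.mod_self])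
  rw [Nat.mod_eq_of_lt (show (i + 1) * u % n + 1 < n by omega)] at hstep
  rw [List.getElem?_eq_getElem (by simpa), List.getElem?_eq_getElem (by simpa),
    getElem_centralWord, getElem_centralWord, hstep]
  simp only [Option.some.injEq, decide_eq_decide]
  omega

theorem getElem?_eq_of_getElem?_centralWord_eq {α : Type*} {w : List α}
    (hlen : w.length + 2 = n) (hpu : p * u ≡ 1 [MOD n]) (hun : u < n)
    (hrot : ∀ i, i < w.length → (i + p) % n < w.length → w[i]? = w[(i + p) % n]?)
    {i j : ℕ} (hi : i < w.length) (hj : j < w.length)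
    (h : (centralWord u n)[i]? = (centralWord u n)[j]?) : w[i]? = w[j]? := by
  have hco := Nat.coprime_of_mul_modEq_one_right hpu
  have hu := Nat.pos_of_mul_modEq_one hpu (by omega)
  have valid (k : ℕ) (hk : k < n) := Nat.add_two_lt_iff_succ_mul_mod hco hu hun hk
  -- Walk from `i` to `j` by rotations by `p`: each raises the residue `(i + 1) * u % n` by one,
  -- and stays inside `w` as long as that residue does not cross `n - u`.
  have walk (d : ℕ) : ∀ i j, i < w.length → j < w.length →
      (j + 1) * u % n = (i + 1) * u % n + d →
      (n ≤ (i + 1) * u % n + u ↔ n ≤ (j + 1) * u % n + u) → w[i]? = w[j]? := by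
    induction d with
    | zero =>
      intro i j hi hj hij _
      rw [Nat.eq_of_succ_mul_mod_eq hco (by omega) (by omega) hij.symm]
    | succ d ih =>
      intro i j hi hj hij hside
      have hstep := Nat.mod_add_succ_mul_mod hpu i
      have hltj := Nat.mod_lt ((j + 1) * u) (show 0 < n by omega)
      rw [Nat.mod_eq_of_lt (show (i + 1) * u % n + 1 < n by omega)] at hstep
      have hk := (valid ((i + p) % n) (Nat.mod_lt (i + p) (by omega))).mpr ⟨by omega, by omega⟩
      rw [hrot i hi (by omega)]
      exact ih _ j (by omega) hj (by omega) (by omega)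
  rw [List.getElem?_eq_getElem (by simp; omega), List.getElem?_eq_getElem (by simp; omega),
    getElem_centralWord, getElem_centralWord, Option.some.injEq, decide_eq_decide] at h
  rcases le_total ((i + 1) * u % n) ((j + 1) * u % n) with hle | hle
  · exact walk ((j + 1) * u % n - (i + 1) * u % n) i j hi hj (by omega) h
  · exact (walk ((i + 1) * u % n - (j + 1) * u % n) j i hj hi (by omega) h.symm).symm

theorem hasPeriod_centralWord (hpu : p * u ≡ 1 [MOD n]) (hp : 0 < p) (hpn : p < n)
    (hun : u < n) : HasPeriod (centralWord u n) p ∧ HasPeriod (centralWord u n) (n - p) := by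
  refine (hasPeriod_and_hasPeriod_iff hp (by omega) (by simp; omega)).mpr fun i hi hi' => ?_
  rw [Nat.add_sub_cancel' hpn.le] at hi' ⊢
  exact getElem?_centralWord_mod_add hpu hun (by simpa using hi) (by simpa using hi')

end Rotation

theorem exists_hasPeriod_centralWord {c n : ℕ} (hco : c.Coprime n) (hc : 0 < c) (hcn : c < n) :
    ∃ p q, p.Coprime q ∧ HasPeriod (centralWord c n) p ∧ HasPeriod (centralWord c n) q ∧
      p + q = n := by
  obtain ⟨p, hpn, hpc⟩ := Nat.exists_mul_mod_eq_one_of_coprime hco (by omega)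
  have hpc' : p * c ≡ 1 [MOD n] := by rw [Nat.ModEq, mul_comm, hpc, Nat.mod_eq_of_lt (by omega)]
  have hp : 0 < p := Nat.pos_of_ne_zero fun h => by simp [h] at hpc
  have hcop : p.Coprime (n - p) := by
    rw [← Nat.coprime_add_self_right, Nat.sub_add_cancel hpn.le]
    exact Nat.coprime_of_mul_modEq_one c hpc'
  obtain ⟨hper₁, hper₂⟩ := hasPeriod_centralWord hpc' hp hpn hcn
  exact ⟨p, n - p, hcop, hper₁, hper₂, by omega⟩

theorem centralWord_one (n : ℕ) : centralWord 1 n = List.replicate (n - 2) false := by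
  refine List.eq_replicate_iff.mpr ⟨length_centralWord, fun b hb => ?_⟩
  obtain ⟨i, hi, rfl⟩ := List.getElem_of_mem hb
  simp only [length_centralWord] at hi
  rw [getElem_centralWord, mul_one, Nat.mod_eq_of_lt (by omega)]
  simp only [decide_eq_false_iff_not]
  omega

theorem List.eq_or_eq_map_not_of_getElem?_eq {w v : List Bool} (hlen : w.length = v.length)
    (hclass : ∀ i j, i < w.length → j < w.length → v[i]? = v[j]? → w[i]? = w[j]?)
    (hfalse : false ∈ w) (htrue : true ∈ w) : w = v ∨ w = v.map not := by
  obtain ⟨i₀, hi₀, hw₀⟩ := List.getElem_of_mem hfalse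
  obtain ⟨j₀, hj₀, hw₁⟩ := List.getElem_of_mem htrue
  have hsome {k : ℕ} (hk : k < w.length) : ∃ b, v[k]? = some b :=
    ⟨v[k], List.getElem?_eq_getElem (hlen ▸ hk)⟩
  obtain ⟨x₀, hx₀⟩ := hsome hi₀
  obtain ⟨y₀, hy₀⟩ := hsome hj₀
  have hsep : x₀ ≠ y₀ := by
    rintro rfl
    have := hclass i₀ j₀ hi₀ hj₀ (hx₀.trans hy₀.symm)
    rw [List.getElem?_eq_getElem hi₀, List.getElem?_eq_getElem hj₀, hw₀, hw₁] at this
    exact Bool.false_ne_true (Option.some.inj this)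
  have hmap : w = v.map (· == y₀) := by
    refine List.ext_getElem? fun i => ?_
    by_cases hi : i < w.length
    · obtain ⟨x, hx⟩ := hsome hi
      rw [List.getElem?_map, hx]
      by_cases hxy : x = y₀
      · rw [hclass i j₀ hi hj₀ (hx.trans (hxy ▸ hy₀.symm)), List.getElem?_eq_getElem hj₀,
          hw₁]
        simp [hxy]
      · have hxx : x = x₀ := by cases x <;> cases x₀ <;> cases y₀ <;> simp_all
        rw [hclass i i₀ hi hi₀ (hx.trans (hxx ▸ hx₀.symm)), List.getElem?_eq_getElem hi₀,
          hw₀]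
        simp [hxy]
    · rw [List.getElem?_eq_none (by omega), List.getElem?_eq_none (by simp; omega)]
  cases y₀
  · exact Or.inr (by simpa using hmap)
  · exact Or.inl (by simpa using hmap)

theorem exists_eq_centralWord_of_hasPeriod {w : List Bool} {p q : ℕ} (hco : p.Coprime q)
    (hp : HasPeriod w p) (hq : HasPeriod w q) (hlen : w.length = p + q - 2) :
    ∃ u, u.Coprime (p + q) ∧ 0 < u ∧ u < p + q ∧
      (w = centralWord u (p + q) ∨ w = (centralWord u (p + q)).map not) := by
  have hn : 2 ≤ p + q := by have := hp.1; have := hq.1; omega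
  by_cases htrue : true ∈ w
  swap
  · refine ⟨1, Nat.coprime_one_left _, one_pos, by omega, Or.inl ?_⟩
    rw [centralWord_one, ← hlen]
    exact List.eq_replicate_iff.mpr ⟨rfl, fun b hb => by cases b <;> simp_all⟩
  by_cases hfalse : false ∈ w
  swap
  · refine ⟨1, Nat.coprime_one_left _, one_pos, by omega, Or.inr ?_⟩
    rw [centralWord_one, List.map_replicate, Bool.not_false, ← hlen]
    exact List.eq_replicate_iff.mpr ⟨rfl, fun b hb => by cases b <;> simp_all⟩
  have hpn : p.Coprime (p + q) := by rwa [add_comm, Nat.coprime_add_self_right]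
  obtain ⟨u, hun, hpu⟩ := Nat.exists_mul_mod_eq_one_of_coprime hpn (by omega)
  have hpu' : p * u ≡ 1 [MOD p + q] := by rw [Nat.ModEq, hpu, Nat.mod_eq_of_lt (by omega)]
  have hrot := (hasPeriod_and_hasPeriod_iff hp.1 hq.1 (by omega)).mp ⟨hp, hq⟩
  refine ⟨u, Nat.coprime_of_mul_modEq_one_right hpu', Nat.pos_of_mul_modEq_one hpu' hn, hun, ?_⟩
  refine List.eq_or_eq_map_not_of_getElem?_eq (by simp; omega) (fun i j hi hj h => ?_)
    hfalse htrue
  exact getElem?_eq_of_getElem?_centralWord_eq (by omega) hpu' hun hrot hi hj h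

theorem isBalanced_cons_append_of_hasPeriod {w : List Bool} {p q : ℕ} (hco : p.Coprime q)
    (hp : HasPeriod w p) (hq : HasPeriod w q) (hlen : w.length = p + q - 2) (a b : Bool) :
    IsBalanced ([a] ++ w ++ [b]) := by
  obtain ⟨u, hcou, hu, hun, rfl | rfl⟩ := exists_eq_centralWord_of_hasPeriod hco hp hq hlen
  · exact isBalanced_cons_centralWord_append a b hcou hu hun
  · simpa using (isBalanced_cons_centralWord_append (!a) (!b) hcou hu hun).map_not

open Finset in
theorem sum_range_add_eq_of_add_period {G : ℕ → ℕ} {n c : ℕ}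
    (hG : ∀ m, G (m + n) = G m + c) (k : ℕ) :
    ∑ s ∈ range n, G (s + k) = ∑ s ∈ range n, G s + k * c := by
  induction k with
  | zero => simp
  | succ k ih =>
    have h := (sum_range_succ' (fun s => G (s + k)) n).symm.trans (sum_range_succ _ n)
    rw [add_comm n k, hG, ih] at h
    simp only [show ∀ s, s + 1 + k = s + (k + 1) by omega, zero_add] at h
    rw [Nat.succ_mul]
    omega

open Finset in
theorem eq_mul_div_of_window_bounds {g : ℕ → ℕ} {n : ℕ}
    (hwin : ∀ s k, s + k ≤ n → g s + g k ≤ g (s + k) ∧ g (s + k) ≤ g s + g k + 1)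
    (hsymm : ∀ k, 0 < k → k < n → g k + g (n - k) + 1 = g n) {k : ℕ} (hk : k ≤ n) :
    g k = k * g n / n := by
  have hg0 : g 0 = 0 := by have := hwin 0 0 (by omega); simp at this; omega
  rcases n.eq_zero_or_pos with rfl | hn
  · obtain rfl : k = 0 := by omega
    simp [hg0]
  -- `G` extends `g` by `G (m + n) = G m + g n`, so `G (s + k) - G s` counts the cyclic window of
  -- length `k` at `s`; these counts lie in `[g k, g k + 1]` and sum to `k * g n` over `s < n`.
  let G : ℕ → ℕ := fun m => m / n * g n + g (m % n)
  have hG (m : ℕ) : G (m + n) = G m + g n := by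
    simp only [G, Nat.add_div_right _ hn, Nat.add_mod_right]
    ring
  have hGlt {m : ℕ} (hm : m < n) : G m = g m := by
    simp [G, Nat.div_eq_of_lt hm, Nat.mod_eq_of_lt hm]
  have hcyc (s : ℕ) (hs : s < n) : G s + g k ≤ G (s + k) ∧ G (s + k) ≤ G s + g k + 1 := by
    rw [hGlt hs]
    rcases (s + k).lt_or_ge n with h | h
    · rw [hGlt h]
      exact hwin s k (by omega)
    · -- a window that wraps around is the complement of a window of length `n - k`
      have hwrap := hwin (s + k - n) (n - k) (by omega)
      rw [show s + k - n + (n - k) = s by omega] at hwrap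
      rw [show s + k = s + k - n + n by omega, hG, hGlt (by omega)]
      rcases hk.lt_or_eq with hkn | hkn
      · have := hsymm k (by omega) hkn
        omega
      · simp only [hkn, Nat.sub_self, hg0, Nat.add_sub_cancel] at hwrap ⊢
        omega
  have h0 : G (0 + k) = G 0 + g k := by
    rcases hk.lt_or_eq with hkn | rfl
    · rw [zero_add, hGlt hkn, hGlt hn, hg0, zero_add]
    · rw [hG, hGlt hn, hg0]
  have hsum := sum_range_add_eq_of_add_period hG k
  have hlow : ∑ s ∈ range n, (G s + g k) ≤ ∑ s ∈ range n, G (s + k) :=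
    sum_le_sum fun s hs => (hcyc s (mem_range.mp hs)).1
  have hup : ∑ s ∈ range n, G (s + k) < ∑ s ∈ range n, (G s + g k + 1) :=
    sum_lt_sum (fun s hs => (hcyc s (mem_range.mp hs)).2) ⟨0, mem_range.mpr hn, by omega⟩
  simp only [sum_add_distrib, sum_const, card_range, smul_eq_mul] at hlow hup
  refine (Nat.div_eq_of_lt_le ?_ ?_).symm <;> nlinarith

theorem coprime_of_eq_mul_div {g : ℕ → ℕ} {n : ℕ} (hn : 0 < n)
    (hdiv : ∀ k ≤ n, g k = k * g n / n)
    (hsymm : ∀ k, 0 < k → k < n → g k + g (n - k) + 1 = g n) : (g n).Coprime n := by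
  by_contra hcop
  set c := g n
  obtain ⟨c', hc'⟩ := Nat.gcd_dvd_left c n
  obtain ⟨k, hk⟩ := Nat.gcd_dvd_right c n
  set d := c.gcd n
  have hd0 : 0 < d := Nat.gcd_pos_of_pos_right c hn
  have hd1 : d ≠ 1 := hcop
  clear_value d
  -- for `k = n / d` both floors in `hsymm` are exact, so they add up to `c`
  have hk0 : 0 < k := Nat.pos_of_ne_zero (by rintro rfl; omega)
  have hkn : k < n := by
    rw [hk]
    exact lt_mul_left hk0 (by omega)
  have hkc : k * c = n * c' := by rw [hk, hc']; ring
  have h₁ : g k = c' := by rw [hdiv k hkn.le, hkc, Nat.mul_div_cancel_left _ hn]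
  have h₂ : g (n - k) = c - c' := by
    rw [hdiv _ (Nat.sub_le n k), Nat.sub_mul, hkc, ← Nat.mul_sub, Nat.mul_div_cancel_left _ hn]
  have hc'c : c' ≤ c := by rw [hc']; exact Nat.le_mul_of_pos_left c' hd0
  have := hsymm k hk0 hkn
  omega

theorem eq_cons_centralWord_append_of_prefixOnes {X : List Bool} {c n : ℕ} (hn : X.length = n)
    (hc : 0 < c) (hcn : c < n) (h : ∀ m ≤ n, prefixOnes X m = m * c / n) :
    X = [false] ++ centralWord c n ++ [true] := by
  refine List.eq_of_prefixOnes_eq (by simp; omega) fun m hm => ?_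
  rw [h m (hn ▸ hm)]
  rcases m.eq_zero_or_pos with rfl | hm0
  · simp [prefixOnes]
  rcases (show m < n ∨ m = n by omega) with hmn | rfl
  · rw [prefixOnes_cons_centralWord_append _ _ hcn hm0 hmn]
    simp
  · rw [prefixOnes_of_length_le (by simp; omega), count_cons_centralWord_append _ _ hc hcn,
      Nat.mul_div_cancel_left _ hm0]
    simp

section Bispecial

variable {w : List Bool}

theorem prefixOnes_true_append_false {m : ℕ} (hm : 0 < m) (hmn : m < w.length + 2) :
    prefixOnes ([true] ++ w ++ [false]) m = prefixOnes ([false] ++ w ++ [true]) m + 1 := by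
  obtain ⟨m, rfl⟩ : ∃ m', m = m' + 1 := ⟨m - 1, by omega⟩
  rw [prefixOnes_cons_append_succ _ _ (by omega), prefixOnes_cons_append_succ _ _ (by omega)]
  simp [add_comm]

theorem prefixOnes_add_prefixOnes_sub (h01 : IsBalanced ([false] ++ w ++ [true]))
    (h10 : IsBalanced ([true] ++ w ++ [false])) {k : ℕ} (hk : 0 < k) (hkn : k < w.length + 2) :
    prefixOnes ([false] ++ w ++ [true]) k + prefixOnes ([false] ++ w ++ [true]) (w.length + 2 - k)
      + 1 = prefixOnes ([false] ++ w ++ [true]) (w.length + 2) := by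
  have h₀₁ := isBalanced_iff_prefixOnes.mp h01 (w.length + 2 - k) 0 k (by simp; omega)
    (by simp; omega)
  have h₁₀ := isBalanced_iff_prefixOnes.mp h10 0 (w.length + 2 - k) k (by simp; omega)
    (by simp; omega)
  have hcount : prefixOnes ([true] ++ w ++ [false]) (w.length + 2) =
      prefixOnes ([false] ++ w ++ [true]) (w.length + 2) := by
    rw [prefixOnes_of_length_le (by simp), prefixOnes_of_length_le (by simp)]
    simp
  rw [Nat.sub_add_cancel hkn.le, zero_add] at h₀₁ h₁₀
  rw [hcount, prefixOnes_true_append_false hk hkn,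
    prefixOnes_true_append_false (by omega) (by omega)] at h₁₀
  simp only [prefixOnes, List.take_zero, List.count_nil] at h₀₁ h₁₀ ⊢
  omega

theorem prefixOnes_window_bounds (h01 : IsBalanced ([false] ++ w ++ [true]))
    (h10 : IsBalanced ([true] ++ w ++ [false])) {s k : ℕ} (hsk : s + k ≤ w.length + 2) :
    prefixOnes ([false] ++ w ++ [true]) s + prefixOnes ([false] ++ w ++ [true]) k ≤
        prefixOnes ([false] ++ w ++ [true]) (s + k) ∧
      prefixOnes ([false] ++ w ++ [true]) (s + k) ≤
        prefixOnes ([false] ++ w ++ [true]) s + prefixOnes ([false] ++ w ++ [true]) k + 1 := by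
  have hsymm := prefixOnes_add_prefixOnes_sub h01 h10 (k := k)
  have h₀₁ := isBalanced_iff_prefixOnes.mp h01 s 0 k (by simp; omega) (by simp; omega)
  have h₁₀ := isBalanced_iff_prefixOnes.mp h10 0 s k (by simp; omega) (by simp; omega)
  have hV (m : ℕ) := prefixOnes_true_append_false (w := w) (m := m)
  set g := prefixOnes ([false] ++ w ++ [true])
  have hg0 : g 0 = 0 := rfl
  refine ⟨?_, by rw [zero_add, hg0] at h₀₁; omega⟩
  rcases k.eq_zero_or_pos with rfl | hk
  · simp [hg0]
  rcases s.eq_zero_or_pos with rfl | hs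
  · simp [hg0]
  rcases hsk.lt_or_eq with hlt | heq
  · -- a window of `0w1` that avoids both ends is a window of `1w0`
    rw [zero_add, hV k hk (by omega), hV s hs (by omega), hV (s + k) (by omega) hlt] at h₁₀
    simp only [prefixOnes, List.take_zero, List.count_nil] at h₁₀
    omega
  · have := hsymm hk (by omega)
    rw [show w.length + 2 - k = s by omega, ← heq] at this
    omega

theorem exists_eq_centralWord_of_isBalanced (h01 : IsBalanced ([false] ++ w ++ [true]))
    (h10 : IsBalanced ([true] ++ w ++ [false])) :
    ∃ c, c.Coprime (w.length + 2) ∧ 0 < c ∧ c < w.length + 2 ∧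
      w = centralWord c (w.length + 2) := by
  have hsymm (k : ℕ) := prefixOnes_add_prefixOnes_sub h01 h10 (k := k)
  have hwin (s k : ℕ) := prefixOnes_window_bounds h01 h10 (s := s) (k := k)
  have hdiv (k : ℕ) (hk : k ≤ w.length + 2) := eq_mul_div_of_window_bounds hwin hsymm hk
  have hco := coprime_of_eq_mul_div (by omega) hdiv hsymm
  have hlen : ([false] ++ w ++ [true]).length = w.length + 2 := by simp
  set c := prefixOnes ([false] ++ w ++ [true]) (w.length + 2)
  have hc : 0 < c := Nat.pos_of_ne_zero fun h => by simp [h] at hco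
  have hcn : c < w.length + 2 := by
    refine lt_of_le_of_ne ?_ fun h => by simp [h] at hco
    rw [← hlen]
    exact (List.take_sublist _ _).count_le _ |>.trans List.count_le_length
  refine ⟨c, hco, hc, hcn, ?_⟩
  simpa using eq_cons_centralWord_append_of_prefixOnes hlen hc hcn hdiv

end Bispecial

/-- A binary word is strictly bispecial (all of `0w0`, `0w1`, `1w0`, `1w1` balanced)
iff it is a central word. -/
theorem strictly_bispecial_iff_central (w : List Bool) :
    (IsBalanced ([false] ++ w ++ [false]) ∧ IsBalanced ([false] ++ w ++ [true]) ∧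
      IsBalanced ([true] ++ w ++ [false]) ∧ IsBalanced ([true] ++ w ++ [true])) ↔
      (∃ p q : ℕ, Nat.Coprime p q ∧ HasPeriod w p ∧ HasPeriod w q ∧
        w.length = p + q - 2) := by
  constructor
  · rintro ⟨-, h01, h10, -⟩
    obtain ⟨c, hco, hc, hcn, hw⟩ := exists_eq_centralWord_of_isBalanced h01 h10
    obtain ⟨p, q, hpq, hp, hq, hn⟩ := exists_hasPeriod_centralWord hco hc hcn
    rw [← hw] at hp hq
    exact ⟨p, q, hpq, hp, hq, by omega⟩
  · rintro ⟨p, q, hco, hp, hq, hlen⟩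
    have := isBalanced_cons_append_of_hasPeriod hco hp hq hlen
    exact ⟨this _ _, this _ _, this _ _, this _ _⟩
end

section
/- If L is a factorial language over alphabet Σ containing all single letters, then for any word w the greedy factorization of w into words of L (taking at each step the longest prefix belonging to L) has minimal length among all factorizations of w into words of L. -/
/-!
Greedy stays ahead: after `k` blocks, the greedy factorization has consumed at least as much
of `w` as any other factorization into `L`. Indeed, if the `k`-th block `y` of the other
factorization ends beyond the current greedy position, the part of `y` past that position is a
suffix of `y`, hence in `L`, and a prefix of the remaining word, so by greediness it is no longer
than the next greedy block.
-/

namespace List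

variable {α : Type*}

def IsGreedy (L : Set (List α)) (xs : List (List α)) : Prop :=
  ∀ i < xs.length, ∀ y : List α,
    y <+: (xs.drop i).flatten → y ∈ L → y.length ≤ (xs.getD i []).length

variable {L : Set (List α)}

theorem IsGreedy.length_le_head {x : List α} {xs : List (List α)} (h : IsGreedy L (x :: xs))
    {y : List α} (hy : y <+: (x :: xs).flatten) (hyL : y ∈ L) : y.length ≤ x.length :=
  h 0 (Nat.succ_pos _) y hy hyL

theorem IsGreedy.of_cons {x : List α} {xs : List (List α)} (h : IsGreedy L (x :: xs)) :
    IsGreedy L xs :=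
  fun i hi => h (i + 1) (Nat.succ_lt_succ hi)

theorem eq_nil_of_flatten_eq_nil {xs : List (List α)} (hne : ∀ x ∈ xs, x ≠ [])
    (h : xs.flatten = []) : xs = [] := by
  cases xs with
  | nil => rfl
  | cons x _ => exact absurd (flatten_eq_nil_iff.mp h x mem_cons_self) (hne x mem_cons_self)

-- The induction invariant: `ys` lags behind the greedy factorization `xs` by the word `t`.
theorem IsGreedy.length_le_of_flatten_eq_append
    (hsuf : ∀ u v : List α, u ∈ L → v <:+ u → v ∈ L) :
    ∀ {xs ys : List (List α)} {t : List α}, IsGreedy L xs → (∀ x ∈ xs, x ≠ []) →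
      (∀ y ∈ ys, y ∈ L) → ys.flatten = t ++ xs.flatten → xs.length ≤ ys.length
  | _, [], _, _, hne, _, hjoin => by
    rw [eq_nil_of_flatten_eq_nil hne (append_eq_nil_iff.mp hjoin.symm).2]
  | [], _ :: _, _, _, _, _, _ => Nat.zero_le _
  | x :: xs, y :: ys, t, hgr, hne, hmem, hjoin => by
    rw [flatten_cons, flatten_cons, append_eq_append_iff] at hjoin
    rcases hjoin with ⟨t', rfl, hys⟩ | ⟨s, rfl, hxs⟩
    · exact (hgr.length_le_of_flatten_eq_append hsuf hne
        (fun z hz => hmem z (mem_cons_of_mem _ hz)) hys).trans (Nat.le_succ _)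
    · have hsL : s ∈ L := hsuf _ s (hmem _ mem_cons_self) (suffix_append t s)
      have hsx : s.length ≤ x.length :=
        hgr.length_le_head (by rw [flatten_cons, hxs]; exact prefix_append _ _) hsL
      obtain ⟨r, hys⟩ : ∃ r, ys.flatten = r ++ xs.flatten := by
        rcases append_eq_append_iff.mp hxs with ⟨a, rfl, h⟩ | ⟨r, -, h⟩
        · obtain rfl : a = [] := by simpa using hsx
          exact ⟨[], by simpa using h.symm⟩
        · exact ⟨r, h⟩
      exact Nat.succ_le_succ <| hgr.of_cons.length_le_of_flatten_eq_append hsuf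
        (fun z hz => hne z (mem_cons_of_mem _ hz)) (fun z hz => hmem z (mem_cons_of_mem _ hz)) hys

end List

theorem greedy_factorization_minimal_general {α : Type*} (L : Set (List α))
    (hfac : ∀ u v : List α, u ∈ L → v <:+: u → v ∈ L)
    (w : List α) (xs : List (List α))
    (hjoin : xs.flatten = w)
    (hne : ∀ x ∈ xs, x ≠ ([] : List α))
    (hgreedy : ∀ i < xs.length, ∀ y : List α,
      y <+: (xs.drop i).flatten → y ∈ L → y.length ≤ (xs.getD i []).length) :
    ∀ ys : List (List α), ys.flatten = w → (∀ y ∈ ys, y ≠ ([] : List α)) →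
      (∀ y ∈ ys, y ∈ L) → xs.length ≤ ys.length := by
  intro ys hjoin' _ hmem'
  exact List.IsGreedy.length_le_of_flatten_eq_append (fun u v hu h => hfac u v hu h.isInfix)
    (t := []) hgreedy hne hmem' (hjoin'.trans hjoin.symm)

/-- If `L` is a factorial language containing all single letters, then any greedy
factorization of `w` into words of `L` (each term is a longest prefix in `L` of the
remaining suffix) is of minimal length among all factorizations of `w` into words of `L`. -/
theorem greedy_factorization_minimal {α : Type*} (L : Set (List α))
    (hfac : ∀ u v : List α, u ∈ L → v <:+: u → v ∈ L)
    (hlet : ∀ a : α, [a] ∈ L)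
    (w : List α) (xs : List (List α))
    (hjoin : xs.flatten = w)
    (hne : ∀ x ∈ xs, x ≠ ([] : List α))
    (hmem : ∀ x ∈ xs, x ∈ L)
    (hgreedy : ∀ i < xs.length, ∀ y : List α,
      y <+: (xs.drop i).flatten → y ∈ L → y.length ≤ (xs.getD i []).length) :
    ∀ ys : List (List α), ys.flatten = w → (∀ y ∈ ys, y ≠ ([] : List α)) →
      (∀ y ∈ ys, y ∈ L) → xs.length ≤ ys.length :=
  greedy_factorization_minimal_general L hfac w xs hjoin hne hgreedy
end

section
/- Every Fibonacci word f_n is balanced, where f_1 = 1, f_2 = 0, and f_n = f_{n-1} f_{n-2} for n > 2. -/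
/-- The Fibonacci words: `f₁ = 1`, `f₂ = 0`, `fₙ = fₙ₋₁fₙ₋₂`. -/
def fibWord : ℕ → List Bool
  | 0 => [true]
  | 1 => [true]
  | 2 => [false]
  | (n + 3) => fibWord (n + 2) ++ fibWord (n + 1)

open Real
open scoped goldenRatio

lemma List.IsInfix.exists_count_take {β : Type*} [BEq β] {u w : List β} (a : β) (h : u <:+: w) :
    ∃ i, i + u.length ≤ w.length ∧
      (w.take (i + u.length)).count a = (w.take i).count a + u.count a := by
  obtain ⟨s, t, rfl⟩ := h
  refine ⟨s.length, by simp, ?_⟩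
  rw [List.append_assoc, List.take_length_add_append, List.take_left, List.take_append_length,
    List.count_append]

def prefixDiscrepancy (α : ℝ) (w : List Bool) (k : ℕ) : ℝ :=
  ((w.take k).count true : ℝ) - k * α

section Discrepancy

variable (α : ℝ) (u v : List Bool)

lemma prefixDiscrepancy_append_of_le {k : ℕ} (hk : k ≤ u.length) :
    prefixDiscrepancy α (u ++ v) k = prefixDiscrepancy α u k := by
  rw [prefixDiscrepancy, prefixDiscrepancy, List.take_append_of_le_length hk]

lemma prefixDiscrepancy_append_length_add (i : ℕ) :
    prefixDiscrepancy α (u ++ v) (u.length + i) =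
      prefixDiscrepancy α u u.length + prefixDiscrepancy α v i := by
  simp only [prefixDiscrepancy, List.take_length_add_append, List.take_length, List.count_append]
  push_cast
  ring

lemma isBalanced_of_prefixDiscrepancy_mem_Ioo (w : List Bool) (c : ℝ)
    (h : ∀ k ≤ w.length, prefixDiscrepancy α w k ∈ Set.Ioo c (c + 1)) : IsBalanced w := by
  have hfactor : ∀ u, u <:+: w →
      (u.count true : ℝ) - u.length * α ∈ Set.Ioo (-1 : ℝ) 1 := by
    intro u hu
    obtain ⟨a, hle, hcount⟩ := hu.exists_count_take true
    have hend := h _ hle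
    have hstart := h a (by omega)
    simp only [prefixDiscrepancy, hcount, Set.mem_Ioo] at hend hstart ⊢
    push_cast at hend
    constructor <;> linarith
  intro u v hu hv hlen
  have hu' := hfactor u hu
  have hv' := hfactor v hv
  rw [hlen, Set.mem_Ioo] at hu'
  rw [Set.mem_Ioo] at hv'
  have hlt : |(u.count true : ℤ) - v.count true| < 2 := by
    rw [← Int.cast_lt (R := ℝ), Int.cast_abs, abs_lt]
    push_cast
    constructor <;> linarith
  exact Int.le_of_lt_add_one hlt

end Discrepancy

section Fibonacci

lemma Real.goldenConj_lt_neg_half : ψ < -1 / 2 := by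
  have : (2 : ℝ) < √5 := by rw [Real.lt_sqrt] <;> norm_num
  rw [goldenConj]
  linarith

lemma Convex.add_goldenConj_pow_add_two_mem {s : Set ℝ} (hs : Convex ℝ s) {x : ℝ} {n : ℕ}
    (h₀ : x + ψ ^ n ∈ s) (h₁ : x + ψ ^ (n + 1) ∈ s) : x + ψ ^ (n + 2) ∈ s := by
  have := hs h₀ h₁ (a := -ψ) (b := 1 + ψ) (by linarith [goldenConj_neg])
    (by linarith [neg_one_lt_goldenConj]) (by ring)
  convert this using 1
  simp only [smul_eq_mul]
  ring

lemma prefixDiscrepancy_fibWord_length (n : ℕ) :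
    prefixDiscrepancy (ψ ^ 2) (fibWord (n + 1)) (fibWord (n + 1)).length = -ψ ^ (n + 1) := by
  induction n using Nat.twoStepInduction with
  | zero => norm_num [prefixDiscrepancy, fibWord, goldenConj_sq]
  | one => norm_num [prefixDiscrepancy, fibWord]
  | more n ih₁ ih₂ =>
    rw [show fibWord (n + 3) = fibWord (n + 2) ++ fibWord (n + 1) from rfl, List.length_append,
      prefixDiscrepancy_append_length_add, ih₁, ih₂]
    linear_combination ψ ^ (n + 1) * goldenConj_sq

def FibDiscrepancyBounds (n : ℕ) : Prop :=
  ∀ k ≤ (fibWord n).length,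
    prefixDiscrepancy (ψ ^ 2) (fibWord n) k + ψ ^ n ∈ Set.Icc ψ (ψ + 1) ∧
      prefixDiscrepancy (ψ ^ 2) (fibWord n) k + ψ ^ (n + 1) ∈ Set.Icc ψ (ψ + 1)

lemma fibDiscrepancyBounds_two : FibDiscrepancyBounds 2 := by
  have h₃ : ψ ^ 3 = 2 * ψ + 1 := by linear_combination (ψ + 1) * goldenConj_sq
  intro k hk
  simp only [fibWord, List.length_singleton] at hk
  interval_cases k <;>
    norm_num [prefixDiscrepancy, fibWord, goldenConj_sq, h₃] <;>
    and_intros <;> linarith [goldenConj_neg, neg_one_lt_goldenConj]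

lemma fibDiscrepancyBounds_three : FibDiscrepancyBounds 3 := by
  have h₃ : ψ ^ 3 = 2 * ψ + 1 := by linear_combination (ψ + 1) * goldenConj_sq
  have h₄ : ψ ^ 4 = 3 * ψ + 2 := by linear_combination (ψ ^ 2 + ψ + 2) * goldenConj_sq
  intro k hk
  simp only [fibWord, List.length_append, List.length_singleton] at hk
  interval_cases k <;>
    norm_num [prefixDiscrepancy, fibWord, goldenConj_sq, h₃, h₄] <;>
    and_intros <;> linarith [goldenConj_neg, neg_one_lt_goldenConj, goldenConj_lt_neg_half]

lemma FibDiscrepancyBounds.add_two {n : ℕ} (h₁ : FibDiscrepancyBounds (n + 1))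
    (h₂ : FibDiscrepancyBounds (n + 2)) : FibDiscrepancyBounds (n + 3) := by
  intro k hk
  rw [show fibWord (n + 3) = fibWord (n + 2) ++ fibWord (n + 1) from rfl] at hk ⊢
  rcases le_or_gt k (fibWord (n + 2)).length with hle | hlt
  · rw [prefixDiscrepancy_append_of_le _ _ _ hle]
    obtain ⟨hlow, hhigh⟩ := h₂ k hle
    exact ⟨hhigh, convex_Icc _ _ |>.add_goldenConj_pow_add_two_mem hlow hhigh⟩
  · obtain ⟨i, rfl⟩ := Nat.exists_eq_add_of_le hlt.le
    have hi : i ≤ (fibWord (n + 1)).length := by rw [List.length_append] at hk; omega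
    rw [prefixDiscrepancy_append_length_add, prefixDiscrepancy_fibWord_length (n + 1)]
    obtain ⟨hlow, hhigh⟩ := h₁ i hi
    have hnext := convex_Icc _ _ |>.add_goldenConj_pow_add_two_mem hlow hhigh
    constructor
    · convert hlow using 1
      linear_combination ψ ^ (n + 1) * goldenConj_sq
    · convert hnext using 1
      linear_combination ψ ^ (n + 2) * goldenConj_sq

lemma fibDiscrepancyBounds {n : ℕ} (hn : 2 ≤ n) : FibDiscrepancyBounds n := by
  obtain ⟨n, rfl⟩ : ∃ m, n = m + 2 := ⟨n - 2, by omega⟩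
  induction n using Nat.twoStepInduction with
  | zero => exact fibDiscrepancyBounds_two
  | one => exact fibDiscrepancyBounds_three
  | more n ih₁ ih₂ => exact (ih₁ (by omega)).add_two (ih₂ (by omega))

lemma prefixDiscrepancy_fibWord_mem_Ioo {n : ℕ} (hn : 2 ≤ n) {k : ℕ}
    (hk : k ≤ (fibWord n).length) :
    prefixDiscrepancy (ψ ^ 2) (fibWord n) k ∈ Set.Ioo ψ (ψ + 1) := by
  obtain ⟨⟨h₁, h₂⟩, h₃, h₄⟩ := fibDiscrepancyBounds hn k hk
  rcases (pow_ne_zero n goldenConj_ne_zero).lt_or_gt with hneg | hpos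
  · have : 0 < ψ ^ (n + 1) := by rw [pow_succ]; exact mul_pos_of_neg_of_neg hneg goldenConj_neg
    constructor <;> linarith
  · have : ψ ^ (n + 1) < 0 := by rw [pow_succ]; exact mul_neg_of_pos_of_neg hpos goldenConj_neg
    constructor <;> linarith

end Fibonacci

/-- Every Fibonacci word is balanced. -/
theorem fibWord_balanced : ∀ n : ℕ, 1 ≤ n → IsBalanced (fibWord n) := by
  intro n hn
  rcases hn.eq_or_lt with rfl | hn
  · refine isBalanced_of_prefixDiscrepancy_mem_Ioo 1 _ (-1 / 2) fun k hk => ?_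
    simp only [fibWord, List.length_singleton] at hk
    interval_cases k <;> norm_num [prefixDiscrepancy, fibWord]
  · exact isBalanced_of_prefixDiscrepancy_mem_Ioo _ _ _ fun _ =>
      prefixDiscrepancy_fibWord_mem_Ioo hn
end

section
/- For coprime positive integers 0 < h < p, the binary word of length p whose i-th letter is ⌊ih/p⌋ − ⌊(i−1)h/p⌋ (for 1 ≤ i ≤ p) is a Lyndon word with respect to the order 0 < 1. -/
/-!
Write `A n = ⌊n h / p⌋`, so that the `k`-th letter of the word is `A (k + 1) - A k`. The function
`A` is superadditive with defect at most one: `A a + A b ≤ A (a + b) ≤ A a + A b + 1`. The suffix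
starting at position `j` is the difference word of `n ↦ A (j + n)`, and it agrees with the word
itself as long as `A (j + n) = A j + A n`. By coprimality this fails at `n = p - j`, since
`A j + A (p - j) < h = A p`; at the first `n` where it fails, `A (j + n) = A j + A n + 1`, so the
suffix has the larger letter at position `n - 1`.
-/

theorem List.drop_map_range {α : Type*} (f : ℕ → α) (j n : ℕ) :
    ((List.range n).map f).drop j = (List.range (n - j)).map fun k => f (j + k) := by
  rw [← List.map_drop, List.range_eq_range', List.drop_range', List.range'_eq_map_range,
    List.map_map]
  simp [Function.comp_def]

theorem List.eq_drop_of_suffix_of_ne {α : Type*} {s l : List α} (hsuf : s <:+ l) (hne : s ≠ [])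
    (hsl : s ≠ l) : ∃ j, 0 < j ∧ j < l.length ∧ s = l.drop j := by
  refine ⟨l.length - s.length, ?_, ?_, List.suffix_iff_eq_drop.mp hsuf⟩
  · have : s.length ≠ l.length := fun h => hsl (hsuf.eq_of_length h)
    have := hsuf.length_le
    omega
  · have := List.length_pos_iff.mpr hne
    have := hsuf.length_le
    omega

section DifferenceWord

variable {A : ℕ → ℕ} (hsuper : ∀ a b, A a + A b ≤ A (a + b))
  (hdefect : ∀ a b, A (a + b) ≤ A a + A b + 1)
include hsuper hdefect

theorem map_range_sub_lt_of_ne_add {j n L L' : ℕ} (hn : A (j + n) ≠ A j + A n) (hnL : n ≤ L)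
    (hLL' : L ≤ L') :
    (List.range L').map (fun k => A (k + 1) - A k) <
      (List.range L).map (fun k => A (j + k + 1) - A (j + k)) := by
  classical
  have hA0 : A 0 = 0 := by simpa using hsuper 0 0
  have hmono : ∀ k, A k ≤ A (k + 1) := fun k => le_of_add_le_left (hsuper k 1)
  have hex : ∃ n, A (j + n) ≠ A j + A n := ⟨n, hn⟩
  obtain ⟨m, hmn, hm, hbelow⟩ : ∃ m ≤ n, A (j + m) ≠ A j + A m ∧ ∀ k < m, A (j + k) = A j + A k :=
    ⟨Nat.find hex, Nat.find_min' hex hn, Nat.find_spec hex,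
      fun k hk => not_not.mp (Nat.find_min hex hk)⟩
  obtain ⟨i, rfl⟩ : ∃ i, m = i + 1 := Nat.exists_eq_succ_of_ne_zero fun h0 => hm (by simp [h0, hA0])
  refine List.lt_iff_exists.mpr (Or.inr
    ⟨i, by simp only [List.length_map, List.length_range]; omega,
      by simp only [List.length_map, List.length_range]; omega, fun k hk => ?_, ?_⟩)
  · have hk := hbelow k (by omega)
    have hk1 : A (j + k + 1) = A j + A (k + 1) := hbelow (k + 1) (by omega)
    simp only [List.getElem_map, List.getElem_range, hk, hk1]
    omega
  · have hi := hbelow i (by omega)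
    have hjump : A (j + i + 1) = A j + A (i + 1) + 1 := by
      have hm' : A (j + i + 1) ≠ A j + A (i + 1) := hm
      have hlow : A j + A (i + 1) ≤ A (j + i + 1) := hsuper j (i + 1)
      have hhigh : A (j + i + 1) ≤ A j + A (i + 1) + 1 := hdefect j (i + 1)
      omega
    simp only [List.getElem_map, List.getElem_range, hi, hjump]
    have := hmono i
    omega

end DifferenceWord

theorem mul_div_add_mul_div_lt_of_coprime {h p a b : ℕ} (hco : Nat.Coprime h p) (ha : 0 < a)
    (hb : 0 < b) (hab : a + b = p) : a * h / p + b * h / p < h := by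
  have hfrac : ∀ c, 0 < c → c < p → p * (c * h / p) < c * h := fun c hc0 hcp =>
    Nat.mul_div_lt_iff_not_dvd.mpr fun hdvd =>
      (Nat.le_of_dvd hc0 (hco.symm.dvd_of_dvd_mul_right hdvd)).not_gt hcp
  have := hfrac a ha (by omega)
  have := hfrac b hb (by omega)
  refine Nat.lt_of_mul_lt_mul_left (a := p) ?_
  calc p * (a * h / p + b * h / p) < a * h + b * h := by rw [mul_add]; omega
    _ = p * h := by rw [← add_mul, hab, mul_comm]

theorem christoffel_lyndon_general (h p : ℕ)
    (hco : Nat.Coprime h p) :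
    ∀ s : List ℕ, s <:+ ((List.range p).map fun k => (k + 1) * h / p - k * h / p) →
      s ≠ [] → s ≠ ((List.range p).map fun k => (k + 1) * h / p - k * h / p) →
      List.Lex (· < ·) ((List.range p).map fun k => (k + 1) * h / p - k * h / p) s := by
  intro s hsuf hne hsw
  obtain ⟨j, hj0, hjp, rfl⟩ := List.eq_drop_of_suffix_of_ne hsuf hne hsw
  simp only [List.length_map, List.length_range] at hjp
  rw [List.drop_map_range]
  have hsuper (a b : ℕ) : a * h / p + b * h / p ≤ (a + b) * h / p := by
    rw [add_mul]; exact Nat.div_add_div_le_add_div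
  have hdefect (a b : ℕ) : (a + b) * h / p ≤ a * h / p + b * h / p + 1 := by
    rw [add_mul]; exact Nat.add_div_le_div_add_div_add_one _ _ _
  have hgap : (j + (p - j)) * h / p ≠ j * h / p + (p - j) * h / p := by
    rw [Nat.add_sub_cancel' hjp.le, Nat.mul_div_cancel_left _ (by omega)]
    exact (mul_div_add_mul_div_lt_of_coprime hco hj0 (by omega) (by omega)).ne'
  exact map_range_sub_lt_of_ne_add (A := fun n => n * h / p) hsuper hdefect hgap le_rfl
    (Nat.sub_le p j)

/-- For coprime `0 < h < p`, the word of length `p` whose `i`-th letter is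
`⌊ih/p⌋ − ⌊(i−1)h/p⌋` (the lower Christoffel word of slope `h/p`) is Lyndon. -/
theorem christoffel_lyndon (h p : ℕ) (h0 : 0 < h) (hp : h < p)
    (hco : Nat.Coprime h p) :
    ∀ s : List ℕ, s <:+ ((List.range p).map fun k => (k + 1) * h / p - k * h / p) →
      s ≠ [] → s ≠ ((List.range p).map fun k => (k + 1) * h / p - k * h / p) →
      List.Lex (· < ·) ((List.range p).map fun k => (k + 1) * h / p - k * h / p) s :=
  christoffel_lyndon_general h p hco
end
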